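/- arXiv:1707.01883 — 9 statements merged into one kernel-verified Lean document; each statement's English description precedes it below -/
import Mathlib

section
/- Let Φ : ℝ³ → ℝ³ be an injective C¹ map and let ρ₀, ρ : ℝ³ → ℝ be continuous nonnegative functions. If mass is conserved, i.e. for every measurable set E ⊆ ℝ³ one has ∫_{Φ(E)} ρ dλ = ∫_E ρ₀ dλ (λ Lebesgue measure), then for every a ∈ ℝ³ the density equation ρ(Φ(a)) · |det DΦ(a)| = ρ₀(a) holds, where DΦ(a) is the 3×3 Jacobian matrix of Φ at a. -/
/-!
By the change of variables formula, mass conservation says that `ρ ∘ Φ · |det DΦ|` and `ρ₀` have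
the same integral over every measurable set. Both are continuous, and two continuous functions
with the same integrals over all compact sets agree everywhere, since Lebesgue measure charges
every nonempty open set.
-/

open MeasureTheory

theorem Continuous.eq_of_forall_setIntegral_isCompact_eq {X E : Type*} [TopologicalSpace X]
    [MeasurableSpace X] [BorelSpace X] [SigmaCompactSpace X] [R1Space X]
    [NormedAddCommGroup E] [NormedSpace ℝ E] [CompleteSpace E]
    [SecondCountableTopologyEither X E] (μ : Measure X) [μ.IsOpenPosMeasure]
    [IsLocallyFiniteMeasure μ] {f g : X → E} (hf : Continuous f) (hg : Continuous g)
    (h : ∀ s, IsCompact s → ∫ x in s, f x ∂μ = ∫ x in s, g x ∂μ) : f = g := by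
  have hfg : f - g =ᵐ[μ] 0 :=
    ae_eq_zero_of_forall_setIntegral_isCompact_eq_zero' (hf.sub hg).locallyIntegrable fun s hs ↦ by
      rw [Pi.sub_def, integral_sub (hf.locallyIntegrable.integrableOn_isCompact hs)
        (hg.locallyIntegrable.integrableOn_isCompact hs), h s hs, sub_self]
  exact sub_eq_zero.1 (((hf.sub hg).ae_eq_iff_eq μ continuous_const).1 hfg)

theorem ContinuousLinearMap.det_of_apply_single {ι R : Type*} [Fintype ι] [DecidableEq ι]
    [CommRing R] [TopologicalSpace R] (f : (ι → R) →L[R] ι → R) :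
    (Matrix.of fun i j => f (Pi.single j 1) i).det = f.det :=
  LinearMap.det_toMatrix' (f : (ι → R) →ₗ[R] ι → R)

theorem hankel_density_equation_general
    (Φ : (Fin 3 → ℝ) → (Fin 3 → ℝ)) (ρ₀ ρ : (Fin 3 → ℝ) → ℝ)
    (hΦ : ContDiff ℝ 1 Φ) (hΦinj : Function.Injective Φ)
    (hρ₀c : Continuous ρ₀) (hρc : Continuous ρ)
    (hmass : ∀ E : Set (Fin 3 → ℝ), MeasurableSet E →
      ∫ x in Φ '' E, ρ x = ∫ a in E, ρ₀ a) :
    ∀ a : Fin 3 → ℝ,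
      ρ (Φ a) * |(Matrix.of fun i j => fderiv ℝ Φ a (Pi.single j 1) i).det| = ρ₀ a := by
  have hΦderiv : ∀ x, HasFDerivAt Φ (fderiv ℝ Φ x) x := fun x ↦
    (hΦ.differentiable one_ne_zero x).hasFDerivAt
  have hcont : Continuous fun x ↦ ρ (Φ x) * |(fderiv ℝ Φ x).det| :=
    (hρc.comp hΦ.continuous).mul
      (ContinuousLinearMap.continuous_det.comp (hΦ.continuous_fderiv one_ne_zero)).abs
  have hdensity := hcont.eq_of_forall_setIntegral_isCompact_eq volume hρ₀c fun s hs ↦ by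
    rw [← hmass s hs.measurableSet, integral_image_eq_integral_abs_det_fderiv_smul volume
      hs.measurableSet (fun x _ ↦ (hΦderiv x).hasFDerivWithinAt) hΦinj.injOn]
    simp only [smul_eq_mul, mul_comm]
  intro a
  rw [ContinuousLinearMap.det_of_apply_single]
  exact congrFun hdensity a

/-- Hankel's density equation (§2, eq. (1)): if mass is conserved under the
C¹ injective map `Φ`, then `ρ(Φ a) · |det DΦ(a)| = ρ₀(a)`. -/
theorem hankel_density_equation
    (Φ : (Fin 3 → ℝ) → (Fin 3 → ℝ)) (ρ₀ ρ : (Fin 3 → ℝ) → ℝ)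
    (hΦ : ContDiff ℝ 1 Φ) (hΦinj : Function.Injective Φ)
    (hρ₀c : Continuous ρ₀) (hρc : Continuous ρ)
    (hρ₀nn : ∀ a, 0 ≤ ρ₀ a) (hρnn : ∀ x, 0 ≤ ρ x)
    (hmass : ∀ E : Set (Fin 3 → ℝ), MeasurableSet E →
      ∫ x in Φ '' E, ρ x = ∫ a in E, ρ₀ a) :
    ∀ a : Fin 3 → ℝ,
      ρ (Φ a) * |(Matrix.of fun i j => fderiv ℝ Φ a (Pi.single j 1) i).det| = ρ₀ a :=
  hankel_density_equation_general Φ ρ₀ ρ hΦ hΦinj hρ₀c hρc hmass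
end

section
/- Let Φ : ℝ³ × ℝ → ℝ³ be a smooth flow map such that Φ(·,t) is a diffeomorphism of ℝ³ for every t, and let u : ℝ³ × ℝ → ℝ³ be the C¹ Eulerian velocity field, i.e. u(Φ(a,t), t) = ∂ₜΦ(a,t) for all (a,t). Then the Jacobian determinant J(a,t) = det DₐΦ(a,t) satisfies ∂ₜJ(a,t) = (div_x u)(Φ(a,t), t) · J(a,t), where div_x u = ∂u₁/∂x₁ + ∂u₂/∂x₂ + ∂u₃/∂x₃. -/
/-- §2, equation (4): the Jacobian determinant `J(a,t) = det DₐΦ(a,t)` of a smooth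
flow map satisfies `∂ₜ J = (div u)(Φ(a,t),t) · J`. -/
theorem hankel_jacobian_evolution
    (Φ : (Fin 3 → ℝ) → ℝ → (Fin 3 → ℝ)) (u : (Fin 3 → ℝ) → ℝ → (Fin 3 → ℝ))
    (hΦ : ContDiff ℝ (⊤ : ℕ∞) (fun q : (Fin 3 → ℝ) × ℝ => Φ q.1 q.2))
    (hdiffeo : ∀ t : ℝ, ∃ Ψ : (Fin 3 → ℝ) → (Fin 3 → ℝ), ContDiff ℝ (⊤ : ℕ∞) Ψ ∧
      Function.LeftInverse Ψ (fun a => Φ a t) ∧ Function.RightInverse Ψ (fun a => Φ a t))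
    (hu : ContDiff ℝ 1 (fun q : (Fin 3 → ℝ) × ℝ => u q.1 q.2))
    (huΦ : ∀ a t, u (Φ a t) t = deriv (fun s => Φ a s) t) :
    ∀ (a : Fin 3 → ℝ) (t : ℝ),
      deriv (fun s =>
          (Matrix.of fun i j => fderiv ℝ (fun b => Φ b s i) a (Pi.single j 1)).det) t
        = (∑ i, fderiv ℝ (fun x => u x t i) (Φ a t) (Pi.single i 1)) *
          (Matrix.of fun i j => fderiv ℝ (fun b => Φ b t i) a (Pi.single j 1)).det := by
  intro a t
  classical
  set F : (Fin 3 → ℝ) × ℝ → (Fin 3 → ℝ) := fun q => Φ q.1 q.2 with hFdef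
  have hFd : Differentiable ℝ F := hΦ.differentiable (by simp)
  have hGsm : ContDiff ℝ (⊤ : ℕ∞) (fderiv ℝ F) := hΦ.fderiv_right (by simp)
  have hGd : Differentiable ℝ (fderiv ℝ F) := hGsm.differentiable (by simp)
  have hUd : Differentiable ℝ (fun q : (Fin 3 → ℝ) × ℝ => u q.1 q.2) :=
    hu.differentiable one_ne_zero
  -- spatial derivative of the flow as a partial derivative of F
  have hsp : ∀ (b : Fin 3 → ℝ) (s : ℝ),
      HasFDerivAt (fun b' => Φ b' s)
        ((fderiv ℝ F (b, s)).comp (ContinuousLinearMap.inl ℝ (Fin 3 → ℝ) ℝ)) b := by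
    intro b s
    exact (hFd (b, s)).hasFDerivAt.comp b (hasFDerivAt_prodMk_left (𝕜 := ℝ) b s)
  have hspe : ∀ (s : ℝ) (i j : Fin 3),
      fderiv ℝ (fun b => Φ b s i) a (Pi.single j 1)
        = fderiv ℝ F (a, s) (Pi.single j 1, 0) i := by
    intro s i j
    have hxi : HasFDerivAt (fun b => Φ b s i)
        ((ContinuousLinearMap.proj (R := ℝ) (φ := fun _ : Fin 3 => ℝ) i).comp
          ((fderiv ℝ F (a, s)).comp (ContinuousLinearMap.inl ℝ (Fin 3 → ℝ) ℝ))) a :=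
      (ContinuousLinearMap.proj (R := ℝ) (φ := fun _ : Fin 3 => ℝ) i).hasFDerivAt.comp a
        (hsp a s)
    rw [hxi.fderiv]
    rfl
  -- time derivative of the flow
  have htd : ∀ (b : Fin 3 → ℝ) (s : ℝ),
      HasDerivAt (fun s' => Φ b s') (fderiv ℝ F (b, s) (0, 1)) s := by
    intro b s
    have h2 : HasDerivAt (fun s' : ℝ => ((b, s') : (Fin 3 → ℝ) × ℝ)) (0, 1) s :=
      (hasDerivAt_const s b).prodMk (hasDerivAt_id s)
    exact (hFd (b, s)).hasFDerivAt.comp_hasDerivAt s h2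
  have hGv : (fun q : (Fin 3 → ℝ) × ℝ => fderiv ℝ F q (0, 1)) = fun q => u (F q) q.2 := by
    funext q
    rw [show F q = Φ q.1 q.2 from rfl, huΦ q.1 q.2]
    exact ((htd q.1 q.2).deriv).symm
  -- partial x-derivative of u
  have hux : ∀ x : Fin 3 → ℝ,
      HasFDerivAt (fun x' => u x' t)
        ((fderiv ℝ (fun q : (Fin 3 → ℝ) × ℝ => u q.1 q.2) (x, t)).comp
          (ContinuousLinearMap.inl ℝ (Fin 3 → ℝ) ℝ)) x := fun x =>
    HasFDerivAt.comp (g := fun q : (Fin 3 → ℝ) × ℝ => u q.1 q.2) x (hUd (x, t)).hasFDerivAt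
      (hasFDerivAt_prodMk_left (𝕜 := ℝ) x t)
  set M : ℝ → Matrix (Fin 3) (Fin 3) ℝ :=
    fun s => Matrix.of fun i j => fderiv ℝ (fun b => Φ b s i) a (Pi.single j 1) with hMdef
  set A : Matrix (Fin 3) (Fin 3) ℝ :=
    Matrix.of (fun i k => fderiv ℝ (fun x => u x t i) (Φ a t) (Pi.single k 1)) with hAdef
  -- the key evolution equation for the entries of M
  have key : ∀ i j, HasDerivAt (fun s => M s i j) (∑ k, A i k * M t k j) t := by
    intro i j
    have hG' : HasFDerivAt (fderiv ℝ F) (fderiv ℝ (fderiv ℝ F) (a, t)) (a, t) :=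
      (hGd (a, t)).hasFDerivAt
    have h2 : HasDerivAt (fun s : ℝ => ((a, s) : (Fin 3 → ℝ) × ℝ)) (0, 1) t :=
      (hasDerivAt_const t a).prodMk (hasDerivAt_id t)
    have h3 : HasDerivAt (fun s => fderiv ℝ F (a, s))
        (fderiv ℝ (fderiv ℝ F) (a, t) (0, 1)) t := hG'.comp_hasDerivAt t h2
    have h4 : HasDerivAt (fun s => fderiv ℝ F (a, s) (Pi.single j 1, 0))
        (fderiv ℝ (fderiv ℝ F) (a, t) (0, 1) (Pi.single j 1, 0)) t := by
      have := h3.clm_apply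
        (hasDerivAt_const t ((Pi.single j 1, (0 : ℝ)) : (Fin 3 → ℝ) × ℝ))
      simpa using this
    have h4i : HasDerivAt (fun s => fderiv ℝ F (a, s) (Pi.single j 1, 0) i)
        (fderiv ℝ (fderiv ℝ F) (a, t) (0, 1) (Pi.single j 1, 0) i) t :=
      (ContinuousLinearMap.proj (R := ℝ) (φ := fun _ : Fin 3 => ℝ)
        i).hasFDerivAt.comp_hasDerivAt t h4
    -- symmetry of the second derivative
    have hsymm := (hΦ.contDiffAt (x := (a, t))).isSymmSndFDerivAt
      (by rw [minSmoothness_of_isRCLikeNormedField]; exact WithTop.coe_le_coe.mpr (le_top : (2 : ℕ∞) ≤ ⊤))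
    have h5 : fderiv ℝ (fderiv ℝ F) (a, t) (0, 1) (Pi.single j 1, 0)
        = fderiv ℝ (fderiv ℝ F) (a, t) (Pi.single j 1, 0) (0, 1) := hsymm _ _
    -- identify the swapped second derivative via u
    have h7 : HasFDerivAt (fun q : (Fin 3 → ℝ) × ℝ => fderiv ℝ F q (0, 1))
        ((ContinuousLinearMap.apply ℝ (Fin 3 → ℝ)
            (((0 : Fin 3 → ℝ), (1 : ℝ)) : (Fin 3 → ℝ) × ℝ)).comp
          (fderiv ℝ (fderiv ℝ F) (a, t))) (a, t) :=
      (ContinuousLinearMap.apply ℝ (Fin 3 → ℝ)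
        (((0 : Fin 3 → ℝ), (1 : ℝ)) : (Fin 3 → ℝ) × ℝ)).hasFDerivAt.comp (a, t) hG'
    have h8 : HasFDerivAt (fun q : (Fin 3 → ℝ) × ℝ => u (F q) q.2)
        ((ContinuousLinearMap.apply ℝ (Fin 3 → ℝ)
            (((0 : Fin 3 → ℝ), (1 : ℝ)) : (Fin 3 → ℝ) × ℝ)).comp
          (fderiv ℝ (fderiv ℝ F) (a, t))) (a, t) := hGv ▸ h7
    have h9 : HasFDerivAt (fun q : (Fin 3 → ℝ) × ℝ => u (F q) q.2)
        ((fderiv ℝ (fun q : (Fin 3 → ℝ) × ℝ => u q.1 q.2) (Φ a t, t)).comp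
          ((fderiv ℝ F (a, t)).prod (ContinuousLinearMap.snd ℝ (Fin 3 → ℝ) ℝ))) (a, t) := by
      have hin : HasFDerivAt (fun q : (Fin 3 → ℝ) × ℝ => (F q, q.2))
          ((fderiv ℝ F (a, t)).prod (ContinuousLinearMap.snd ℝ (Fin 3 → ℝ) ℝ)) (a, t) :=
        (hFd (a, t)).hasFDerivAt.prodMk hasFDerivAt_snd
      exact (hUd (Φ a t, t)).hasFDerivAt.comp (a, t) hin
    have h10 := h8.unique h9
    -- the column vector
    set w : Fin 3 → ℝ := fderiv ℝ F (a, t) (Pi.single j 1, 0) with hwdef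
    have hw : w = ∑ k, M t k j • (Pi.single k 1 : Fin 3 → ℝ) := by
      funext k
      have : w k = M t k j := (hspe t k j).symm
      simp [Finset.sum_apply, Pi.single_apply, this]
    have hval : fderiv ℝ (fderiv ℝ F) (a, t) (Pi.single j 1, 0) (0, 1)
        = fderiv ℝ (fun x => u x t) (Φ a t) w := by
      have e1 : fderiv ℝ (fderiv ℝ F) (a, t) (Pi.single j 1, 0) (0, 1)
          = ((ContinuousLinearMap.apply ℝ (Fin 3 → ℝ)
              (((0 : Fin 3 → ℝ), (1 : ℝ)) : (Fin 3 → ℝ) × ℝ)).comp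
            (fderiv ℝ (fderiv ℝ F) (a, t))) (Pi.single j 1, 0) := rfl
      rw [e1, h10]
      have e2 : ((fderiv ℝ (fun q : (Fin 3 → ℝ) × ℝ => u q.1 q.2) (Φ a t, t)).comp
            ((fderiv ℝ F (a, t)).prod (ContinuousLinearMap.snd ℝ (Fin 3 → ℝ) ℝ)))
            (Pi.single j 1, 0)
          = fderiv ℝ (fun q : (Fin 3 → ℝ) × ℝ => u q.1 q.2) (Φ a t, t) (w, 0) := by
        simp [hwdef]
      rw [e2, (hux (Φ a t)).fderiv]
      rfl
    have huxi : ∀ (i' : Fin 3) (v : Fin 3 → ℝ),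
        fderiv ℝ (fun x => u x t i') (Φ a t) v
          = fderiv ℝ (fun x => u x t) (Φ a t) v i' := by
      intro i' v
      have hxi : HasFDerivAt (fun x => u x t i')
          ((ContinuousLinearMap.proj (R := ℝ) (φ := fun _ : Fin 3 => ℝ) i').comp
            ((fderiv ℝ (fun q : (Fin 3 → ℝ) × ℝ => u q.1 q.2) (Φ a t, t)).comp
              (ContinuousLinearMap.inl ℝ (Fin 3 → ℝ) ℝ))) (Φ a t) :=
        (ContinuousLinearMap.proj (R := ℝ) (φ := fun _ : Fin 3 => ℝ) i').hasFDerivAt.comp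
          (Φ a t) (hux (Φ a t))
      rw [hxi.fderiv, (hux (Φ a t)).fderiv]
      rfl
    have hNA : fderiv ℝ (fun x => u x t) (Φ a t) w i = ∑ k, A i k * M t k j := by
      rw [hw, map_sum]
      simp only [map_smul, Finset.sum_apply, Pi.smul_apply, smul_eq_mul]
      refine Finset.sum_congr rfl fun k _ => ?_
      have : A i k = fderiv ℝ (fun x => u x t i) (Φ a t) (Pi.single k 1) := rfl
      rw [this, huxi i (Pi.single k 1)]
      ring
    have hfun : (fun s => fderiv ℝ F (a, s) (Pi.single j 1, 0) i) = fun s => M s i j := by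
      funext s; exact (hspe s i j).symm
    have : HasDerivAt (fun s => M s i j)
        (fderiv ℝ (fderiv ℝ F) (a, t) (0, 1) (Pi.single j 1, 0) i) t := hfun ▸ h4i
    have hD : fderiv ℝ (fderiv ℝ F) (a, t) (0, 1) (Pi.single j 1, 0) i
        = ∑ k, A i k * M t k j := by
      rw [h5, hval]; exact hNA
    exact hD ▸ this
  -- Jacobi's formula via the explicit 3×3 determinant
  have hdet : HasDerivAt (fun s => (M s).det) ((∑ i, A i i) * (M t).det) t := by
    have e : (fun s => (M s).det) = fun s =>
        M s 0 0 * M s 1 1 * M s 2 2 - M s 0 0 * M s 1 2 * M s 2 1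
          - M s 0 1 * M s 1 0 * M s 2 2 + M s 0 1 * M s 1 2 * M s 2 0
          + M s 0 2 * M s 1 0 * M s 2 1 - M s 0 2 * M s 1 1 * M s 2 0 := by
      funext s; exact Matrix.det_fin_three (M s)
    rw [e]
    have H := ((((((((key 0 0).fun_mul (key 1 1)).fun_mul (key 2 2)).fun_sub
        (((key 0 0).fun_mul (key 1 2)).fun_mul (key 2 1))).fun_sub
        (((key 0 1).fun_mul (key 1 0)).fun_mul (key 2 2))).fun_add
        (((key 0 1).fun_mul (key 1 2)).fun_mul (key 2 0))).fun_add
        (((key 0 2).fun_mul (key 1 0)).fun_mul (key 2 1))).fun_sub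
        (((key 0 2).fun_mul (key 1 1)).fun_mul (key 2 0)))
    refine H.congr_deriv ?_
    simp only [Matrix.det_fin_three, Fin.sum_univ_three]
    ring
  have hgoal : deriv (fun s => (M s).det) t = (∑ i, A i i) * (M t).det := hdet.deriv
  convert hgoal using 2 with i
  rfl
end

section
/- Let Φ : ℝ³ × ℝ → ℝ³ be a smooth flow map with Φ(a,0) = a, such that Φ(·,t) is a diffeomorphism of ℝ³ for every t; let u : ℝ³ × ℝ → ℝ³ be the C¹ Eulerian velocity field, i.e. u(Φ(a,t), t) = ∂ₜΦ(a,t); let ρ : ℝ³ × ℝ → ℝ be C¹ and ρ₀ : ℝ³ → ℝ be such that the Lagrangian density equation ρ(Φ(a,t), t) · det DₐΦ(a,t) = ρ₀(a) holds for all (a,t). Then the Eulerian continuity equation ∂ₜρ + ∂(ρu₁)/∂x₁ + ∂(ρu₂)/∂x₂ + ∂(ρu₃)/∂x₃ = 0 holds at every point (x,t) ∈ ℝ³ × ℝ. -/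
noncomputable section

private lemma fderiv_partial_fst {F : ((Fin 3 → ℝ) × ℝ) → ℝ} {a : Fin 3 → ℝ} {s : ℝ}
    (hF : DifferentiableAt ℝ F (a, s)) (v : Fin 3 → ℝ) :
    fderiv ℝ (fun b => F (b, s)) a v = fderiv ℝ F (a, s) (v, 0) := by
  have h : HasFDerivAt (fun b => F (b, s))
      ((fderiv ℝ F (a, s)).comp (ContinuousLinearMap.inl ℝ (Fin 3 → ℝ) ℝ)) a :=
    hF.hasFDerivAt.comp a (hasFDerivAt_prodMk_left a s)
  rw [h.fderiv]; rfl

private lemma hasDerivAt_comp_curve {F : ((Fin 3 → ℝ) × ℝ) → ℝ} {γ : ℝ → Fin 3 → ℝ}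
    {t : ℝ} {γ' : Fin 3 → ℝ} (hF : DifferentiableAt ℝ F (γ t, t))
    (hγ : HasDerivAt γ γ' t) :
    HasDerivAt (fun s => F (γ s, s)) (fderiv ℝ F (γ t, t) (γ', 1)) t := by
  have hcurve : HasDerivAt (fun s => (γ s, s)) ((γ', 1) : (Fin 3 → ℝ) × ℝ) t :=
    hγ.prodMk (hasDerivAt_id t)
  exact HasFDerivAt.comp_hasDerivAt (f := fun s => (γ s, s)) t hF.hasFDerivAt hcurve

private lemma fderiv_proj_apply {f : (Fin 3 → ℝ) → (Fin 3 → ℝ)} {a : Fin 3 → ℝ}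
    (hf : DifferentiableAt ℝ f a) (k : Fin 3) (v : Fin 3 → ℝ) :
    fderiv ℝ (fun b => f b k) a v = (fderiv ℝ f a v) k := by
  have h := ((ContinuousLinearMap.proj (R := ℝ) (φ := fun _ : Fin 3 => ℝ) k).hasFDerivAt.comp
    a hf.hasFDerivAt).fderiv
  calc fderiv ℝ (fun b => f b k) a v
      = fderiv ℝ (⇑(ContinuousLinearMap.proj (R := ℝ) (φ := fun _ : Fin 3 => ℝ) k) ∘ f) a v := rfl
    _ = ((ContinuousLinearMap.proj (R := ℝ) (φ := fun _ : Fin 3 => ℝ) k).comp (fderiv ℝ f a)) v := by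
        rw [h]
    _ = (fderiv ℝ f a v) k := rfl

/-- §2, equation (5): from the Lagrangian density equation
`ρ(Φ(a,t),t) · det DₐΦ(a,t) = ρ₀(a)` one derives the Eulerian continuity equation
`∂ₜρ + div(ρ u) = 0`. -/
theorem hankel_continuity_equation
    (Φ : (Fin 3 → ℝ) → ℝ → (Fin 3 → ℝ)) (u : (Fin 3 → ℝ) → ℝ → (Fin 3 → ℝ))
    (ρ : (Fin 3 → ℝ) → ℝ → ℝ) (ρ₀ : (Fin 3 → ℝ) → ℝ)
    (hΦ : ContDiff ℝ (⊤ : ℕ∞) (fun q : (Fin 3 → ℝ) × ℝ => Φ q.1 q.2))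
    (hΦ0 : ∀ a, Φ a 0 = a)
    (hdiffeo : ∀ t : ℝ, ∃ Ψ : (Fin 3 → ℝ) → (Fin 3 → ℝ), ContDiff ℝ (⊤ : ℕ∞) Ψ ∧
      Function.LeftInverse Ψ (fun a => Φ a t) ∧ Function.RightInverse Ψ (fun a => Φ a t))
    (hu : ContDiff ℝ 1 (fun q : (Fin 3 → ℝ) × ℝ => u q.1 q.2))
    (huΦ : ∀ a t, u (Φ a t) t = deriv (fun s => Φ a s) t)
    (hρ : ContDiff ℝ 1 (fun q : (Fin 3 → ℝ) × ℝ => ρ q.1 q.2))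
    (hdens : ∀ (a : Fin 3 → ℝ) (t : ℝ),
      ρ (Φ a t) t *
          (Matrix.of fun i j => fderiv ℝ (fun b => Φ b t i) a (Pi.single j 1)).det
        = ρ₀ a) :
    ∀ (x : Fin 3 → ℝ) (t : ℝ),
      deriv (fun s => ρ x s) t
        + ∑ i, fderiv ℝ (fun y => ρ y t * u y t i) x (Pi.single i 1) = 0 := by
  intro x t
  obtain ⟨Ψ, hΨ, hΨl, hΨr⟩ := hdiffeo t
  set a := Ψ x with ha_def
  have hax : Φ a t = x := hΨr x
  -- basic differentiability facts
  have hΦ'd : Differentiable ℝ (fun q : (Fin 3 → ℝ) × ℝ => Φ q.1 q.2) := hΦ.differentiable (by simp)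
  have hρ'd : Differentiable ℝ (fun q : (Fin 3 → ℝ) × ℝ => ρ q.1 q.2) := hρ.differentiable (by simp)
  have hui : ∀ i, Differentiable ℝ (fun q : (Fin 3 → ℝ) × ℝ => u q.1 q.2 i) :=
    fun i => (contDiff_pi.1 hu i).differentiable (by simp)
  have hΦtd : ∀ s : ℝ, Differentiable ℝ (fun b => Φ b s) :=
    fun s => hΦ'd.comp (differentiable_id.prodMk (differentiable_const s))
  have hutd : ∀ i, Differentiable ℝ (fun y => u y t i) :=
    fun i => (hui i).comp (differentiable_id.prodMk (differentiable_const t))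
  have hρtd : Differentiable ℝ (fun y => ρ y t) :=
    hρ'd.comp (differentiable_id.prodMk (differentiable_const t))
  -- Step A : time derivative of the Jacobian matrix entries (mixed partials symmetry)
  have key : ∀ i j : Fin 3, HasDerivAt (fun s => fderiv ℝ (fun b => Φ b s i) a (Pi.single j 1)) (fderiv ℝ (fun b => u (Φ b t) t i) a (Pi.single j 1)) t := by
    intro i j
    have hG : ContDiff ℝ (⊤ : ℕ∞) (fun q : (Fin 3 → ℝ) × ℝ => Φ q.1 q.2 i) := contDiff_pi.1 hΦ i
    have hGd : Differentiable ℝ (fun q : (Fin 3 → ℝ) × ℝ => Φ q.1 q.2 i) := hG.differentiable (by simp)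
    have hH : ContDiff ℝ 1 (fderiv ℝ (fun q : (Fin 3 → ℝ) × ℝ => Φ q.1 q.2 i)) :=
      hG.fderiv_right (WithTop.coe_le_coe.mpr le_top)
    have hHd : Differentiable ℝ (fderiv ℝ (fun q : (Fin 3 → ℝ) × ℝ => Φ q.1 q.2 i)) :=
      hH.differentiable (by simp)
    have hm_eq : (fun s => fderiv ℝ (fun b => Φ b s i) a (Pi.single j 1)) = (fun s =>
        fderiv ℝ (fun q : (Fin 3 → ℝ) × ℝ => Φ q.1 q.2 i) (a, s) ((Pi.single j 1, 0) : (Fin 3 → ℝ) × ℝ)) :=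
      funext fun s => fderiv_partial_fst (hGd (a, s)) _
    have hK : DifferentiableAt ℝ (fun p : (Fin 3 → ℝ) × ℝ =>
        fderiv ℝ (fun q : (Fin 3 → ℝ) × ℝ => Φ q.1 q.2 i) p ((Pi.single j 1, 0) : (Fin 3 → ℝ) × ℝ)) (a, t) :=
      (hHd (a, t)).clm_apply (differentiableAt_const _)
    have h1 : HasDerivAt (fun s =>
        fderiv ℝ (fun q : (Fin 3 → ℝ) × ℝ => Φ q.1 q.2 i) (a, s) ((Pi.single j 1, 0) : (Fin 3 → ℝ) × ℝ))
        (fderiv ℝ (fun p : (Fin 3 → ℝ) × ℝ =>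
          fderiv ℝ (fun q : (Fin 3 → ℝ) × ℝ => Φ q.1 q.2 i) p ((Pi.single j 1, 0) : (Fin 3 → ℝ) × ℝ)) (a, t)
          ((0, 1) : (Fin 3 → ℝ) × ℝ)) t :=
      hasDerivAt_comp_curve (γ := fun _ => a) hK (hasDerivAt_const t a)
    have h2 : fderiv ℝ (fun p : (Fin 3 → ℝ) × ℝ =>
          fderiv ℝ (fun q : (Fin 3 → ℝ) × ℝ => Φ q.1 q.2 i) p ((Pi.single j 1, 0) : (Fin 3 → ℝ) × ℝ)) (a, t)
          ((0, 1) : (Fin 3 → ℝ) × ℝ)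
        = fderiv ℝ (fderiv ℝ (fun q : (Fin 3 → ℝ) × ℝ => Φ q.1 q.2 i)) (a, t)
            ((0, 1) : (Fin 3 → ℝ) × ℝ) ((Pi.single j 1, 0) : (Fin 3 → ℝ) × ℝ) := by
      rw [fderiv_clm_apply (hHd (a, t)) (differentiableAt_const _)]
      simp
    have hsymm := ((hG.contDiffAt (x := ((a, t) : (Fin 3 → ℝ) × ℝ))).isSymmSndFDerivAt (by rw [minSmoothness_of_isRCLikeNormedField]; exact WithTop.coe_le_coe.mpr le_top))
      (((0, 1)) : (Fin 3 → ℝ) × ℝ) ((Pi.single j 1, 0) : (Fin 3 → ℝ) × ℝ)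
    have h3 : fderiv ℝ (fderiv ℝ (fun q : (Fin 3 → ℝ) × ℝ => Φ q.1 q.2 i)) (a, t)
            ((Pi.single j 1, 0) : (Fin 3 → ℝ) × ℝ) ((0, 1) : (Fin 3 → ℝ) × ℝ)
        = fderiv ℝ (fun p : (Fin 3 → ℝ) × ℝ =>
            fderiv ℝ (fun q : (Fin 3 → ℝ) × ℝ => Φ q.1 q.2 i) p ((0, 1) : (Fin 3 → ℝ) × ℝ)) (a, t)
            ((Pi.single j 1, 0) : (Fin 3 → ℝ) × ℝ) := by
      rw [fderiv_clm_apply (hHd (a, t)) (differentiableAt_const _)]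
      simp
    have hW : (fun p : (Fin 3 → ℝ) × ℝ =>
          fderiv ℝ (fun q : (Fin 3 → ℝ) × ℝ => Φ q.1 q.2 i) p ((0, 1) : (Fin 3 → ℝ) × ℝ))
        = fun p : (Fin 3 → ℝ) × ℝ => u (Φ p.1 p.2) p.2 i := by
      funext p
      have hd1 : HasDerivAt (fun s => Φ p.1 s i)
          (fderiv ℝ (fun q : (Fin 3 → ℝ) × ℝ => Φ q.1 q.2 i) (p.1, p.2) ((0, 1) : (Fin 3 → ℝ) × ℝ)) p.2 :=
        hasDerivAt_comp_curve (γ := fun _ => p.1) (hGd (p.1, p.2)) (hasDerivAt_const p.2 p.1)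
      have hγc : HasDerivAt (fun s => Φ p.1 s) (deriv (fun s => Φ p.1 s) p.2) p.2 :=
        ((hΦ'd.comp ((differentiable_const p.1).prodMk differentiable_id)) p.2).hasDerivAt
      have hd2 : HasDerivAt (fun s => Φ p.1 s i) ((deriv (fun s => Φ p.1 s) p.2) i) p.2 :=
        HasFDerivAt.comp_hasDerivAt (f := fun s => Φ p.1 s) p.2
          (ContinuousLinearMap.proj (R := ℝ) (φ := fun _ : Fin 3 => ℝ) i).hasFDerivAt hγc
      have hup := hd1.unique hd2
      rw [show ((p.1, p.2) : (Fin 3 → ℝ) × ℝ) = p from rfl] at hup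
      rw [hup, ← huΦ p.1 p.2]
    have hUd : DifferentiableAt ℝ (fun p : (Fin 3 → ℝ) × ℝ => u (Φ p.1 p.2) p.2 i) (a, t) :=
      ((hui i).comp (hΦ'd.prodMk differentiable_snd)) (a, t)
    have h4 : fderiv ℝ (fun p : (Fin 3 → ℝ) × ℝ => u (Φ p.1 p.2) p.2 i) (a, t)
          ((Pi.single j 1, 0) : (Fin 3 → ℝ) × ℝ) = fderiv ℝ (fun b => u (Φ b t) t i) a (Pi.single j 1) :=
      (fderiv_partial_fst hUd _).symm
    rw [hm_eq, ← h4, ← hW, ← h3, ← hsymm, ← h2]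
    exact h1
  -- Step A' : chain rule for the entries of the velocity gradient
  have hc : ∀ i j : Fin 3, fderiv ℝ (fun b => u (Φ b t) t i) a (Pi.single j 1)
      = fderiv ℝ (fun y => u y t i) x (Pi.single 0 1) * fderiv ℝ (fun b => Φ b t 0) a (Pi.single j 1) + fderiv ℝ (fun y => u y t i) x (Pi.single 1 1) * fderiv ℝ (fun b => Φ b t 1) a (Pi.single j 1) + fderiv ℝ (fun y => u y t i) x (Pi.single 2 1) * fderiv ℝ (fun b => Φ b t 2) a (Pi.single j 1) := by
    intro i j
    have hcomp : fderiv ℝ (fun b => u (Φ b t) t i) a =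
        (fderiv ℝ (fun y => u y t i) x).comp (fderiv ℝ (fun b => Φ b t) a) := by
      rw [← hax]
      exact fderiv_comp a ((hutd i) (Φ a t)) ((hΦtd t) a)
    have hkey : fderiv ℝ (fun b => u (Φ b t) t i) a (Pi.single j 1) = fderiv ℝ (fun y => u y t i) x (fderiv ℝ (fun b => Φ b t) a (Pi.single j 1)) := by
      rw [hcomp]; rfl
    have hwk : ∀ k : Fin 3, (fderiv ℝ (fun b => Φ b t) a (Pi.single j 1)) k
        = fderiv ℝ (fun b => Φ b t k) a (Pi.single j 1) :=
      fun k => (fderiv_proj_apply ((hΦtd t) a) k _).symm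
    have hwsum : fderiv ℝ (fun b => Φ b t) a (Pi.single j 1)
        = (fderiv ℝ (fun b => Φ b t) a (Pi.single j 1)) 0 • (Pi.single (0 : Fin 3) (1:ℝ) : Fin 3 → ℝ)
          + (fderiv ℝ (fun b => Φ b t) a (Pi.single j 1)) 1 • (Pi.single (1 : Fin 3) (1:ℝ) : Fin 3 → ℝ)
          + (fderiv ℝ (fun b => Φ b t) a (Pi.single j 1)) 2 • (Pi.single (2 : Fin 3) (1:ℝ) : Fin 3 → ℝ) := by
      funext l; fin_cases l <;> simp
    rw [hkey, hwsum]
    simp only [map_add, map_smul, smul_eq_mul]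
    rw [hwk 0, hwk 1, hwk 2]
    ring
  -- Step B : material derivative of the density along the flow
  have hγ : HasDerivAt (fun s => Φ a s) (u x t) t := by
    have hdd : DifferentiableAt ℝ (fun s => Φ a s) t :=
      (hΦ'd.comp ((differentiable_const a).prodMk differentiable_id)) t
    have hd := hdd.hasDerivAt
    rwa [← huΦ a t, hax] at hd
  have hB : HasDerivAt (fun s => ρ (Φ a s) s) (fderiv ℝ (fun q : (Fin 3 → ℝ) × ℝ => ρ q.1 q.2) (x, t) (u x t, 1)) t := by
    have hd := hasDerivAt_comp_curve (F := fun q : (Fin 3 → ℝ) × ℝ => ρ q.1 q.2) (hρ'd (Φ a t, t)) hγ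
    rwa [hax] at hd
  -- determinant expansion
  have hdet_eq : ∀ s : ℝ, (Matrix.of fun i j => fderiv ℝ (fun b => Φ b s i) a (Pi.single j 1)).det
      = (fderiv ℝ (fun b => Φ b s 0) a (Pi.single 0 1) * fderiv ℝ (fun b => Φ b s 1) a (Pi.single 1 1) * fderiv ℝ (fun b => Φ b s 2) a (Pi.single 2 1) - fderiv ℝ (fun b => Φ b s 0) a (Pi.single 0 1) * fderiv ℝ (fun b => Φ b s 1) a (Pi.single 2 1) * fderiv ℝ (fun b => Φ b s 2) a (Pi.single 1 1) - fderiv ℝ (fun b => Φ b s 0) a (Pi.single 1 1) * fderiv ℝ (fun b => Φ b s 1) a (Pi.single 0 1) * fderiv ℝ (fun b => Φ b s 2) a (Pi.single 2 1) + fderiv ℝ (fun b => Φ b s 0) a (Pi.single 1 1) * fderiv ℝ (fun b => Φ b s 1) a (Pi.single 2 1) * fderiv ℝ (fun b => Φ b s 2) a (Pi.single 0 1) + fderiv ℝ (fun b => Φ b s 0) a (Pi.single 2 1) * fderiv ℝ (fun b => Φ b s 1) a (Pi.single 0 1) * fderiv ℝ (fun b => Φ b s 2) a (Pi.single 1 1)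 - fderiv ℝ (fun b => Φ b s 0) a (Pi.single 2 1) * fderiv ℝ (fun b => Φ b s 1) a (Pi.single 1 1) * fderiv ℝ (fun b => Φ b s 2) a (Pi.single 0 1)) := by
    intro s; rw [Matrix.det_fin_three]; rfl
  -- Step C : Jacobi formula for the 3×3 determinant
  have hP : HasDerivAt (fun s => (fderiv ℝ (fun b => Φ b s 0) a (Pi.single 0 1) * fderiv ℝ (fun b => Φ b s 1) a (Pi.single 1 1) * fderiv ℝ (fun b => Φ b s 2) a (Pi.single 2 1) - fderiv ℝ (fun b => Φ b s 0) a (Pi.single 0 1) * fderiv ℝ (fun b => Φ b s 1) a (Pi.single 2 1) * fderiv ℝ (fun b => Φ b s 2) a (Pi.single 1 1) - fderiv ℝ (fun b => Φ b s 0) a (Pi.single 1 1) * fderiv ℝ (fun b => Φ b s 1) a (Pi.single 0 1) * fderiv ℝ (fun b => Φ b s 2) a (Pi.single 2 1) + fderiv ℝ (fun b => Φ b s 0) a (Pi.single 1 1) * fderiv ℝ (fun b => Φ b s 1) a (Pi.single 2 1) * fderiv ℝ (fun b => Φ b s 2) a (Pi.single 0 1) + fderiv ℝ (fun b => Φ b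 s 0) a (Pi.single 2 1) * fderiv ℝ (fun b => Φ b s 1) a (Pi.single 0 1) * fderiv ℝ (fun b => Φ b s 2) a (Pi.single 1 1) - fderiv ℝ (fun b => Φ b s 0) a (Pi.single 2 1) * fderiv ℝ (fun b => Φ b s 1) a (Pi.single 1 1) * fderiv ℝ (fun b => Φ b s 2) a (Pi.single 0 1)))
      ((fderiv ℝ (fun y => u y t 0) x (Pi.single 0 1) + fderiv ℝ (fun y => u y t 1) x (Pi.single 1 1) + fderiv ℝ (fun y => u y t 2) x (Pi.single 2 1)) * (fderiv ℝ (fun b => Φ b t 0) a (Pi.single 0 1) * fderiv ℝ (fun b => Φ b t 1) a (Pi.single 1 1) * fderiv ℝ (fun b => Φ b t 2) a (Pi.single 2 1) - fderiv ℝ (fun b => Φ b t 0) a (Pi.single 0 1) * fderiv ℝ (fun b => Φ b t 1) a (Pi.single 2 1) * fderiv ℝ (fun b => Φ b t 2) a (Pi.single 1 1) - fderiv ℝ (fun b => Φ b t 0) a (Pi.single 1 1) * fderiv ℝ (fun b => Φ b t 1) a (Pi.single 0 1) * fderiv ℝ (fun b => Φ b t 2) a (Pi.single 2 1) + fderiv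 ℝ (fun b => Φ b t 0) a (Pi.single 1 1) * fderiv ℝ (fun b => Φ b t 1) a (Pi.single 2 1) * fderiv ℝ (fun b => Φ b t 2) a (Pi.single 0 1) + fderiv ℝ (fun b => Φ b t 0) a (Pi.single 2 1) * fderiv ℝ (fun b => Φ b t 1) a (Pi.single 0 1) * fderiv ℝ (fun b => Φ b t 2) a (Pi.single 1 1) - fderiv ℝ (fun b => Φ b t 0) a (Pi.single 2 1) * fderiv ℝ (fun b => Φ b t 1) a (Pi.single 1 1) * fderiv ℝ (fun b => Φ b t 2) a (Pi.single 0 1))) t := by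
    have hcomb := ((((((key 0 0).mul (key 1 1)).mul (key 2 2)).sub
        (((key 0 0).mul (key 1 2)).mul (key 2 1))).sub
        (((key 0 1).mul (key 1 0)).mul (key 2 2))).add
        (((key 0 1).mul (key 1 2)).mul (key 2 0))).add
        (((key 0 2).mul (key 1 0)).mul (key 2 1)) |>.sub
        (((key 0 2).mul (key 1 1)).mul (key 2 0))
    simp only [Pi.mul_def, Pi.sub_def, Pi.add_def] at hcomb
    refine hcomb.congr_deriv ?_
    rw [hc 0 0, hc 1 1, hc 2 2, hc 0 1, hc 1 0, hc 0 2, hc 2 0, hc 1 2, hc 2 1]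
    ring
  -- the product is constant in time
  have hg := hB.mul hP
  rw [hax] at hg
  have hgconst : (fun s => ρ (Φ a s) s * (fderiv ℝ (fun b => Φ b s 0) a (Pi.single 0 1) * fderiv ℝ (fun b => Φ b s 1) a (Pi.single 1 1) * fderiv ℝ (fun b => Φ b s 2) a (Pi.single 2 1) - fderiv ℝ (fun b => Φ b s 0) a (Pi.single 0 1) * fderiv ℝ (fun b => Φ b s 1) a (Pi.single 2 1) * fderiv ℝ (fun b => Φ b s 2) a (Pi.single 1 1) - fderiv ℝ (fun b => Φ b s 0) a (Pi.single 1 1) * fderiv ℝ (fun b => Φ b s 1) a (Pi.single 0 1) * fderiv ℝ (fun b => Φ b s 2) a (Pi.single 2 1) + fderiv ℝ (fun b => Φ b s 0) a (Pi.single 1 1) * fderiv ℝ (fun b => Φ b s 1) a (Pi.single 2 1) * fderiv ℝ (fun b => Φ b s 2) a (Pi.single 0 1) + fderiv ℝ (fun b => Φ b s 0) a (Pi.single 2 1) * fderiv ℝ (fun b => Φ b s 1) a (Pi.single 0 1) * fderiv ℝ (fun b => Φ b s 2) a (Pi.single 1 1) - fderiv ℝ (fun b => Φ b s 0) a (Pi.single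 2 1) * fderiv ℝ (fun b => Φ b s 1) a (Pi.single 1 1) * fderiv ℝ (fun b => Φ b s 2) a (Pi.single 0 1))) = fun _ => ρ₀ a := by
    funext s; rw [← hdet_eq s]; exact hdens a s
  simp only [Pi.mul_def] at hg
  rw [hgconst] at hg
  have h0 := hg.unique (hasDerivAt_const t (ρ₀ a))
  -- the Jacobian determinant is nonzero
  have hdetne : (fderiv ℝ (fun b => Φ b t 0) a (Pi.single 0 1) * fderiv ℝ (fun b => Φ b t 1) a (Pi.single 1 1) * fderiv ℝ (fun b => Φ b t 2) a (Pi.single 2 1) - fderiv ℝ (fun b => Φ b t 0) a (Pi.single 0 1) * fderiv ℝ (fun b => Φ b t 1) a (Pi.single 2 1) * fderiv ℝ (fun b => Φ b t 2) a (Pi.single 1 1) - fderiv ℝ (fun b => Φ b t 0) a (Pi.single 1 1) * fderiv ℝ (fun b => Φ b t 1) a (Pi.single 0 1) * fderiv ℝ (fun b => Φ b t 2) a (Pi.single 2 1) + fderiv ℝ (fun b => Φ b t 0) a (Pi.single 1 1) * fderiv ℝ (fun b => Φ b t 1) a (Pi.single 2 1) * fderiv ℝ (fun b => Φ b t 2)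 a (Pi.single 0 1) + fderiv ℝ (fun b => Φ b t 0) a (Pi.single 2 1) * fderiv ℝ (fun b => Φ b t 1) a (Pi.single 0 1) * fderiv ℝ (fun b => Φ b t 2) a (Pi.single 1 1) - fderiv ℝ (fun b => Φ b t 0) a (Pi.single 2 1) * fderiv ℝ (fun b => Φ b t 1) a (Pi.single 1 1) * fderiv ℝ (fun b => Φ b t 2) a (Pi.single 0 1)) ≠ 0 := by
    have hML : (Matrix.of fun i j => fderiv ℝ (fun b => Φ b t i) a (Pi.single j 1))
        = LinearMap.toMatrix' ((fderiv ℝ (fun b => Φ b t) a) : (Fin 3 → ℝ) →ₗ[ℝ] (Fin 3 → ℝ)) := by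
      ext i j
      rw [LinearMap.toMatrix'_apply, Matrix.of_apply, fderiv_proj_apply ((hΦtd t) a) i (Pi.single j 1)]
      have hs : (Pi.single j (1:ℝ) : Fin 3 → ℝ) = fun j' => if j' = j then (1:ℝ) else 0 := by
        funext l; simp [Pi.single_apply]
      rw [hs]
      rfl
    have hcompid : (fderiv ℝ Ψ x).comp (fderiv ℝ (fun b => Φ b t) a) = ContinuousLinearMap.id ℝ _ := by
      have hid : (fun b => Ψ (Φ b t)) = id := funext hΨl
      have hfc : fderiv ℝ (fun b => Ψ (Φ b t)) a
          = (fderiv ℝ Ψ (Φ a t)).comp (fderiv ℝ (fun b => Φ b t) a) :=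
        fderiv_comp a ((hΨ.differentiable (by simp)) (Φ a t)) ((hΦtd t) a)
      rw [hid, fderiv_id] at hfc
      rw [← hax]
      exact hfc.symm
    have hdet1 : LinearMap.det ((fderiv ℝ Ψ x : (Fin 3 → ℝ) →ₗ[ℝ] (Fin 3 → ℝ)))
        * LinearMap.det ((fderiv ℝ (fun b => Φ b t) a : (Fin 3 → ℝ) →ₗ[ℝ] (Fin 3 → ℝ))) = 1 := by
      have hcoe : ((fderiv ℝ Ψ x : (Fin 3 → ℝ) →ₗ[ℝ] (Fin 3 → ℝ))).comp
          ((fderiv ℝ (fun b => Φ b t) a : (Fin 3 → ℝ) →ₗ[ℝ] (Fin 3 → ℝ))) = LinearMap.id := by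
        rw [← ContinuousLinearMap.toLinearMap_comp, hcompid]; rfl
      rw [← LinearMap.det_comp, hcoe, LinearMap.det_id]
    rw [← hdet_eq t, hML, LinearMap.det_toMatrix']
    intro hzero
    rw [hzero, mul_zero] at hdet1
    exact zero_ne_one hdet1
  -- combine : the continuity equation at (x, t)
  have hfinal : fderiv ℝ (fun q : (Fin 3 → ℝ) × ℝ => ρ q.1 q.2) (x, t) (u x t, 1) + ρ x t * (fderiv ℝ (fun y => u y t 0) x (Pi.single 0 1) + fderiv ℝ (fun y => u y t 1) x (Pi.single 1 1) + fderiv ℝ (fun y => u y t 2) x (Pi.single 2 1)) = 0 := by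
    have h1 : (fderiv ℝ (fun q : (Fin 3 → ℝ) × ℝ => ρ q.1 q.2) (x, t) (u x t, 1) + ρ x t * (fderiv ℝ (fun y => u y t 0) x (Pi.single 0 1) + fderiv ℝ (fun y => u y t 1) x (Pi.single 1 1) + fderiv ℝ (fun y => u y t 2) x (Pi.single 2 1))) * (fderiv ℝ (fun b => Φ b t 0) a (Pi.single 0 1) * fderiv ℝ (fun b => Φ b t 1) a (Pi.single 1 1) * fderiv ℝ (fun b => Φ b t 2) a (Pi.single 2 1) - fderiv ℝ (fun b => Φ b t 0) a (Pi.single 0 1) * fderiv ℝ (fun b => Φ b t 1) a (Pi.single 2 1) * fderiv ℝ (fun b => Φ b t 2) a (Pi.single 1 1) - fderiv ℝ (fun b => Φ b t 0) a (Pi.single 1 1) * fderiv ℝ (fun b => Φ b t 1) a (Pi.single 0 1) * fderiv ℝ (fun b => Φ b t 2) a (Pi.single 2 1) + fderiv ℝ (fun b => Φ b t 0) a (Pi.single 1 1) * fderiv ℝ (fun b => Φ b t 1) a (Pi.single 2 1) * fderiv ℝ (fun b => Φ b t 2) a (Pi.single 0 1) + fderiv ℝ (fun b => Φ b t 0) a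 (Pi.single 2 1) * fderiv ℝ (fun b => Φ b t 1) a (Pi.single 0 1) * fderiv ℝ (fun b => Φ b t 2) a (Pi.single 1 1) - fderiv ℝ (fun b => Φ b t 0) a (Pi.single 2 1) * fderiv ℝ (fun b => Φ b t 1) a (Pi.single 1 1) * fderiv ℝ (fun b => Φ b t 2) a (Pi.single 0 1)) = 0 := by linear_combination h0
    exact (mul_eq_zero.mp h1).resolve_right hdetne
  -- translate the goal
  have hgoal1 : deriv (fun s => ρ x s) t
      = fderiv ℝ (fun q : (Fin 3 → ℝ) × ℝ => ρ q.1 q.2) (x, t) ((0, 1) : (Fin 3 → ℝ) × ℝ) :=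
    (hasDerivAt_comp_curve (F := fun q : (Fin 3 → ℝ) × ℝ => ρ q.1 q.2) (γ := fun _ => x)
      (hρ'd (x, t)) (hasDerivAt_const t x)).deriv
  have hsum : ∀ i : Fin 3, fderiv ℝ (fun y => ρ y t * u y t i) x (Pi.single i 1)
      = fderiv ℝ (fun q : (Fin 3 → ℝ) × ℝ => ρ q.1 q.2) (x, t) ((Pi.single i 1, 0) : (Fin 3 → ℝ) × ℝ) * u x t i
        + ρ x t * fderiv ℝ (fun y => u y t i) x (Pi.single i 1) := by
    intro i
    rw [fderiv_fun_mul (hρtd x) ((hutd i) x)]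
    rw [← fderiv_partial_fst (hρ'd (x, t)) (Pi.single i 1)]
    simp [smul_eq_mul]
    ring
  have hvec : ((u x t, 1) : (Fin 3 → ℝ) × ℝ)
      = (((0 : Fin 3 → ℝ), (1:ℝ)) : (Fin 3 → ℝ) × ℝ)
        + u x t 0 • ((Pi.single (0 : Fin 3) (1:ℝ), (0:ℝ)) : (Fin 3 → ℝ) × ℝ)
        + u x t 1 • ((Pi.single (1 : Fin 3) (1:ℝ), (0:ℝ)) : (Fin 3 → ℝ) × ℝ)
        + u x t 2 • ((Pi.single (2 : Fin 3) (1:ℝ), (0:ℝ)) : (Fin 3 → ℝ) × ℝ) := by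
    refine Prod.ext ?_ ?_
    · funext l; fin_cases l <;> simp
    · simp
  have hr' : fderiv ℝ (fun q : (Fin 3 → ℝ) × ℝ => ρ q.1 q.2) (x, t) (u x t, 1)
      = fderiv ℝ (fun q : (Fin 3 → ℝ) × ℝ => ρ q.1 q.2) (x, t) ((0, 1) : (Fin 3 → ℝ) × ℝ)
        + u x t 0 * fderiv ℝ (fun q : (Fin 3 → ℝ) × ℝ => ρ q.1 q.2) (x, t) ((Pi.single (0:Fin 3) (1:ℝ), 0) : (Fin 3 → ℝ) × ℝ)
        + u x t 1 * fderiv ℝ (fun q : (Fin 3 → ℝ) × ℝ => ρ q.1 q.2) (x, t) ((Pi.single (1:Fin 3) (1:ℝ), 0) : (Fin 3 → ℝ) × ℝ)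
        + u x t 2 * fderiv ℝ (fun q : (Fin 3 → ℝ) × ℝ => ρ q.1 q.2) (x, t) ((Pi.single (2:Fin 3) (1:ℝ), 0) : (Fin 3 → ℝ) × ℝ) := by
    rw [hvec]
    simp only [map_add, map_smul, smul_eq_mul]
  rw [Fin.sum_univ_three, hgoal1, hsum 0, hsum 1, hsum 2]
  linear_combination hfinal - hr'
end
end

section
/- Let Φ : ℝ³ × ℝ → ℝ³ be a smooth flow map and Ω : ℝ³ × ℝ → ℝ a C² function such that ∂ₜ²Φ(a,t) = (∇ₓΩ)(Φ(a,t), t) for all (a,t). Assume Ω is axisymmetric about the third coordinate axis: Ω(R x, t) = Ω(x, t) for every rotation R of ℝ³ fixing the axis spanned by e₃ and all (x,t). Then for each particle a, the angular momentum about the axis, t ↦ Φ₁(a,t) ∂ₜΦ₂(a,t) − Φ₂(a,t) ∂ₜΦ₁(a,t), is constant in t; equivalently, in cylindrical coordinates the quantity r² dθ/dt has a time-independent value H for each particle. -/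
open Real

/-- Differentiating axisymmetry in the angle: the azimuthal derivative of `Ω` vanishes. -/
lemma svanberg_aux (Ω : (Fin 3 → ℝ) → ℝ → ℝ)
    (hΩ : ContDiff ℝ 2 (fun q : (Fin 3 → ℝ) × ℝ => Ω q.1 q.2))
    (haxisym : ∀ (θ : ℝ) (x : Fin 3 → ℝ) (t : ℝ),
      Ω ![x 0 * Real.cos θ - x 1 * Real.sin θ,
          x 0 * Real.sin θ + x 1 * Real.cos θ, x 2] t = Ω x t)
    (t : ℝ) (x : Fin 3 → ℝ) :
    x 0 * fderiv ℝ (fun y => Ω y t) x (Pi.single 1 1)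
      - x 1 * fderiv ℝ (fun y => Ω y t) x (Pi.single 0 1) = 0 := by
  set F : (Fin 3 → ℝ) → ℝ := fun y => Ω y t with hF
  have hFdiff : DifferentiableAt ℝ F x := by
    have : Differentiable ℝ F := by
      have h1 : Differentiable ℝ (fun q : (Fin 3 → ℝ) × ℝ => Ω q.1 q.2) :=
        hΩ.differentiable (by norm_num)
      exact h1.comp (differentiable_id.prodMk (differentiable_const t))
    exact this.differentiableAt
  set γ : ℝ → (Fin 3 → ℝ) := fun θ =>
    ![x 0 * Real.cos θ - x 1 * Real.sin θ, x 0 * Real.sin θ + x 1 * Real.cos θ, x 2] with hγdef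
  have hγ0 : γ 0 = x := by
    funext i
    fin_cases i <;> simp [hγdef]
  have hγ : HasDerivAt γ ![-(x 1), x 0, 0] 0 := by
    rw [hasDerivAt_pi]
    intro i
    fin_cases i
    · simp only [hγdef, Matrix.cons_val_zero]
      have h1 := ((Real.hasDerivAt_cos 0).const_mul (x 0)).sub
        ((Real.hasDerivAt_sin 0).const_mul (x 1))
      simpa [Pi.sub_def] using h1
    · simp only [hγdef, Matrix.cons_val_one, Matrix.head_cons]
      have h1 := ((Real.hasDerivAt_sin 0).const_mul (x 0)).add
        ((Real.hasDerivAt_cos 0).const_mul (x 1))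
      simpa [Pi.add_def] using h1
    · simpa [hγdef] using (hasDerivAt_const (0:ℝ) (x 2))
  have hcomp : HasDerivAt (fun θ => F (γ θ)) (fderiv ℝ F x ![-(x 1), x 0, 0]) 0 := by
    have hFdiff' : DifferentiableAt ℝ F (γ 0) := by rw [hγ0]; exact hFdiff
    have h3 := (hFdiff'.hasFDerivAt).comp_hasDerivAt 0 hγ
    rwa [hγ0] at h3
  have hconst : (fun θ => F (γ θ)) = fun _ => Ω x t := by
    funext θ
    exact haxisym θ x t
  have hzero : fderiv ℝ F x ![-(x 1), x 0, 0] = 0 := by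
    have h2 : HasDerivAt (fun θ => F (γ θ)) 0 0 := by
      rw [hconst]; exact hasDerivAt_const 0 _
    exact hcomp.unique h2
  have hvec : (![-(x 1), x 0, 0] : Fin 3 → ℝ)
      = x 0 • (Pi.single 1 1 : Fin 3 → ℝ) - x 1 • (Pi.single 0 1 : Fin 3 → ℝ) := by
    funext i
    fin_cases i <;> simp [Pi.single_apply]
  rw [hvec, map_sub, map_smul, map_smul] at hzero
  simpa [smul_eq_mul, sub_eq_zero] using hzero

/-- §5 (Svanberg's theorem): for motion under a potential `Ω` that is axisymmetric
about the third coordinate axis, the angular momentum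
`Φ₁ ∂ₜΦ₂ − Φ₂ ∂ₜΦ₁` (i.e. `r² dθ/dt`) of each particle is constant in time. -/
theorem hankel_svanberg_angular_momentum
    (Φ : (Fin 3 → ℝ) → ℝ → (Fin 3 → ℝ)) (Ω : (Fin 3 → ℝ) → ℝ → ℝ)
    (hΦ : ContDiff ℝ (⊤ : ℕ∞) (fun q : (Fin 3 → ℝ) × ℝ => Φ q.1 q.2))
    (hΩ : ContDiff ℝ 2 (fun q : (Fin 3 → ℝ) × ℝ => Ω q.1 q.2))
    (hmotion : ∀ (a : Fin 3 → ℝ) (t : ℝ) (i : Fin 3),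
      deriv (fun s => deriv (fun r => Φ a r) s) t i
        = fderiv ℝ (fun x => Ω x t) (Φ a t) (Pi.single i 1))
    (haxisym : ∀ (θ : ℝ) (x : Fin 3 → ℝ) (t : ℝ),
      Ω ![x 0 * Real.cos θ - x 1 * Real.sin θ,
          x 0 * Real.sin θ + x 1 * Real.cos θ, x 2] t = Ω x t) :
    ∀ (a : Fin 3 → ℝ), ∃ H : ℝ, ∀ t : ℝ,
      Φ a t 0 * deriv (fun s => Φ a s) t 1 - Φ a t 1 * deriv (fun s => Φ a s) t 0 = H := by
  intro a
  set g : ℝ → (Fin 3 → ℝ) := fun t => Φ a t with hgdef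
  have hg : ContDiff ℝ (⊤ : ℕ∞) g :=
    hΦ.comp ((contDiff_const (c := a)).prodMk contDiff_id)
  have hg2 : ContDiff ℝ ((⊤:ℕ∞):WithTop ℕ∞) g := hg.of_le (by simp)
  obtain ⟨hgdiff, hg'⟩ := contDiff_infty_iff_deriv.1 hg2
  obtain ⟨hg'diff, _⟩ := contDiff_infty_iff_deriv.1 hg'
  set v : ℝ → (Fin 3 → ℝ) := deriv g with hvdef
  set w : ℝ → (Fin 3 → ℝ) := deriv v with hwdef
  set L : ℝ → ℝ := fun t => g t 0 * v t 1 - g t 1 * v t 0 with hLdef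
  have hL : ∀ t, HasDerivAt L 0 t := by
    intro t
    have hgt : HasDerivAt g (v t) t := (hgdiff t).hasDerivAt
    have hvt : HasDerivAt v (w t) t := (hg'diff t).hasDerivAt
    have hg0 : HasDerivAt (fun t => g t 0) (v t 0) t := (hasDerivAt_pi.1 hgt) 0
    have hg1 : HasDerivAt (fun t => g t 1) (v t 1) t := (hasDerivAt_pi.1 hgt) 1
    have hv0 : HasDerivAt (fun t => v t 0) (w t 0) t := (hasDerivAt_pi.1 hvt) 0
    have hv1 : HasDerivAt (fun t => v t 1) (w t 1) t := (hasDerivAt_pi.1 hvt) 1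
    have hmain := (hg0.mul hv1).sub (hg1.mul hv0)
    have hkey : v t 0 * v t 1 + g t 0 * w t 1 - (v t 1 * v t 0 + g t 1 * w t 0) = 0 := by
      have hw0 : w t 0 = fderiv ℝ (fun x => Ω x t) (g t) (Pi.single 0 1) := hmotion a t 0
      have hw1 : w t 1 = fderiv ℝ (fun x => Ω x t) (g t) (Pi.single 1 1) := hmotion a t 1
      have := svanberg_aux Ω hΩ haxisym t (g t)
      rw [hw0, hw1]
      ring_nf
      ring_nf at this
      linarith
    rw [hkey] at hmain
    exact hmain
  refine ⟨L 0, fun t => ?_⟩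
  have : L t = L 0 :=
    is_const_of_deriv_eq_zero (fun s => (hL s).differentiableAt)
      (fun s => (hL s).deriv) t 0
  exact this
end

section
/- Let Φ : ℝ³ × ℝ → ℝ³ be a smooth flow map with Φ(a,0) = a for all a, and let Ω : ℝ³ × ℝ → ℝ be a C² function such that ∂ₜ²Φ(a,t) = (∇ₓΩ)(Φ(a,t), t) for all (a,t). Define v : ℝ³ × ℝ → ℝ³ by v(a,t) = (DₐΦ(a,t))ᵀ ∂ₜΦ(a,t), with components α, β, γ, and let u₀(a) = ∂ₜΦ(a,0) be the initial velocity. Then the Cauchy invariants hold: for all (a,t), ∂β/∂a₃(a,t) − ∂γ/∂a₂(a,t) = ∂(u₀)₂/∂a₃(a) − ∂(u₀)₃/∂a₂(a), ∂γ/∂a₁(a,t) − ∂α/∂a₃(a,t) = ∂(u₀)₃/∂a₁(a) − ∂(u₀)₁/∂a₃(a), and ∂α/∂a₂(a,t) − ∂β/∂a₁(a,t) = ∂(u₀)₁/∂a₂(a) − ∂(u₀)₂/∂a₁(a); in particular these three combinations are independent of t. -/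
noncomputable def pd (u : (Fin 3 → ℝ) × ℝ) (f : ((Fin 3 → ℝ) × ℝ) → ℝ) :
    ((Fin 3 → ℝ) × ℝ) → ℝ := fun q => fderiv ℝ f q u

theorem pd_contDiff {f : ((Fin 3 → ℝ) × ℝ) → ℝ} (hf : ContDiff ℝ (⊤ : ℕ∞) f)
    (u : (Fin 3 → ℝ) × ℝ) : ContDiff ℝ (⊤ : ℕ∞) (pd u f) :=
  (hf.fderiv_right (by simp)).clm_apply contDiff_const

theorem pd_diff {f : ((Fin 3 → ℝ) × ℝ) → ℝ} (hf : ContDiff ℝ (⊤ : ℕ∞) f)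
    (u : (Fin 3 → ℝ) × ℝ) : Differentiable ℝ (pd u f) :=
  (pd_contDiff hf u).differentiable (by simp)

theorem pd_swap {f : ((Fin 3 → ℝ) × ℝ) → ℝ} (hf : ContDiff ℝ 2 f)
    (u w q : (Fin 3 → ℝ) × ℝ) : pd u (pd w f) q = pd w (pd u f) q := by
  have hd1 : DifferentiableAt ℝ (fderiv ℝ f) q :=
    ((hf.fderiv_right (m := 1) le_rfl).differentiable one_ne_zero).differentiableAt
  have key : ∀ u' z : (Fin 3 → ℝ) × ℝ,
      pd u' (pd z f) q = fderiv ℝ (fderiv ℝ f) q u' z := by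
    intro u' z
    show fderiv ℝ (fun y => fderiv ℝ f y z) q u' = _
    rw [fderiv_clm_apply hd1 (differentiableAt_const z)]
    simp
  rw [key u w, key w u]
  exact hf.contDiffAt.isSymmSndFDerivAt (by simp) u w

theorem pd_space {f : ((Fin 3 → ℝ) × ℝ) → ℝ} {a : Fin 3 → ℝ} {t : ℝ}
    (hf : DifferentiableAt ℝ f (a, t)) (w : Fin 3 → ℝ) :
    fderiv ℝ (fun b => f (b, t)) a w = pd (w, 0) f (a, t) := by
  have h : HasFDerivAt (fun b : Fin 3 → ℝ => f (b, t))
      ((fderiv ℝ f (a, t)).comp (ContinuousLinearMap.inl ℝ _ _)) a :=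
    hf.hasFDerivAt.comp a (hasFDerivAt_prodMk_left a t)
  rw [h.fderiv]
  simp [pd]

theorem pd_time {f : ((Fin 3 → ℝ) × ℝ) → ℝ} {a : Fin 3 → ℝ} {t : ℝ}
    (hf : DifferentiableAt ℝ f (a, t)) :
    HasDerivAt (fun s => f (a, s)) (pd (0, 1) f (a, t)) t :=
  hf.hasFDerivAt.comp_hasDerivAt t ((hasDerivAt_const t a).prodMk (hasDerivAt_id t))

theorem pd_sum {F : Fin 3 → ((Fin 3 → ℝ) × ℝ) → ℝ} {q u : (Fin 3 → ℝ) × ℝ}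
    (hF : ∀ i, DifferentiableAt ℝ (F i) q) :
    pd u (fun x => ∑ i, F i x) q = ∑ i, pd u (F i) q := by
  show fderiv ℝ (fun x => ∑ i, F i x) q u = _
  rw [fderiv_fun_sum fun i _ => hF i]
  simp [pd]

theorem pd_mul {f g : ((Fin 3 → ℝ) × ℝ) → ℝ} {q u : (Fin 3 → ℝ) × ℝ}
    (hf : DifferentiableAt ℝ f q) (hg : DifferentiableAt ℝ g q) :
    pd u (fun x => f x * g x) q = pd u f q * g q + f q * pd u g q := by
  show fderiv ℝ (fun x => f x * g x) q u = _
  rw [fderiv_fun_mul hf hg]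
  simp [pd]
  ring

theorem pd_add {f g : ((Fin 3 → ℝ) × ℝ) → ℝ} {q u : (Fin 3 → ℝ) × ℝ}
    (hf : DifferentiableAt ℝ f q) (hg : DifferentiableAt ℝ g q) :
    pd u (fun x => f x + g x) q = pd u f q + pd u g q := by
  show fderiv ℝ (fun x => f x + g x) q u = _
  rw [fderiv_fun_add hf hg]
  simp [pd]

theorem pd_const_mul {f : ((Fin 3 → ℝ) × ℝ) → ℝ} {q u : (Fin 3 → ℝ) × ℝ}
    (hf : DifferentiableAt ℝ f q) (c : ℝ) :
    pd u (fun x => c * f x) q = c * pd u f q := by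
  show fderiv ℝ (fun x => c * f x) q u = _
  rw [fderiv_const_mul hf c]
  simp [pd]

noncomputable section

def dt3 : (Fin 3 → ℝ) × ℝ := (0, 1)
def ds3 (j : Fin 3) : (Fin 3 → ℝ) × ℝ := (Pi.single j 1, 0)

def cP (Φ : (Fin 3 → ℝ) → ℝ → (Fin 3 → ℝ)) (i : Fin 3) : ((Fin 3 → ℝ) × ℝ) → ℝ :=
  fun q => Φ q.1 q.2 i

def cV (Φ : (Fin 3 → ℝ) → ℝ → (Fin 3 → ℝ)) (j : Fin 3) : ((Fin 3 → ℝ) × ℝ) → ℝ :=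
  fun q => ∑ i, pd (ds3 j) (cP Φ i) q * pd dt3 (cP Φ i) q

def cψ (Φ : (Fin 3 → ℝ) → ℝ → (Fin 3 → ℝ)) (Ω : (Fin 3 → ℝ) → ℝ → ℝ) :
    ((Fin 3 → ℝ) × ℝ) → ℝ :=
  fun q => Ω (Φ q.1 q.2) q.2 + (1/2) * ∑ i, pd dt3 (cP Φ i) q * pd dt3 (cP Φ i) q

end

section Aux
variable {Φ : (Fin 3 → ℝ) → ℝ → (Fin 3 → ℝ)} {Ω : (Fin 3 → ℝ) → ℝ → ℝ}

theorem hcP (hΦ : ContDiff ℝ (⊤ : ℕ∞) (fun q : (Fin 3 → ℝ) × ℝ => Φ q.1 q.2)) (i : Fin 3) :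
    ContDiff ℝ (⊤ : ℕ∞) (cP Φ i) := contDiff_pi.mp hΦ i

theorem hcV (hΦ : ContDiff ℝ (⊤ : ℕ∞) (fun q : (Fin 3 → ℝ) × ℝ => Φ q.1 q.2)) (j : Fin 3) :
    ContDiff ℝ (⊤ : ℕ∞) (cV Φ j) :=
  ContDiff.sum fun i _ =>
    (pd_contDiff (hcP hΦ i) (ds3 j)).mul (pd_contDiff (hcP hΦ i) dt3)

theorem hDt (hΦ : ContDiff ℝ (⊤ : ℕ∞) (fun q : (Fin 3 → ℝ) × ℝ => Φ q.1 q.2))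
    (a : Fin 3 → ℝ) (t : ℝ) :
    HasDerivAt (fun s => Φ a s) (fun i => pd dt3 (cP Φ i) (a, t)) t :=
  hasDerivAt_pi.2 fun i => pd_time (((hcP hΦ i).differentiable (by simp)) (a, t))

theorem hDs (hΦ : ContDiff ℝ (⊤ : ℕ∞) (fun q : (Fin 3 → ℝ) × ℝ => Φ q.1 q.2))
    (a : Fin 3 → ℝ) (t : ℝ) (i j : Fin 3) :
    fderiv ℝ (fun b => Φ b t i) a (Pi.single j 1) = pd (ds3 j) (cP Φ i) (a, t) :=
  pd_space (((hcP hΦ i).differentiable (by simp)) (a, t)) (Pi.single j 1)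

theorem hvV (hΦ : ContDiff ℝ (⊤ : ℕ∞) (fun q : (Fin 3 → ℝ) × ℝ => Φ q.1 q.2))
    {v : (Fin 3 → ℝ) → ℝ → (Fin 3 → ℝ)}
    (hv : ∀ (a : Fin 3 → ℝ) (t : ℝ) (j : Fin 3),
      v a t j = ∑ i, fderiv ℝ (fun b => Φ b t i) a (Pi.single j 1)
        * deriv (fun s => Φ a s) t i)
    (a : Fin 3 → ℝ) (t : ℝ) (j : Fin 3) : v a t j = cV Φ j (a, t) := by
  rw [hv, (hDt hΦ a t).deriv]
  exact Finset.sum_congr rfl fun i _ => by rw [hDs hΦ a t i j]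

end Aux
section Aux2
variable {Φ : (Fin 3 → ℝ) → ℝ → (Fin 3 → ℝ)} {Ω : (Fin 3 → ℝ) → ℝ → ℝ}

-- translated motion law
theorem hmot' (hΦ : ContDiff ℝ (⊤ : ℕ∞) (fun q : (Fin 3 → ℝ) × ℝ => Φ q.1 q.2))
    (hmotion : ∀ (a : Fin 3 → ℝ) (t : ℝ) (i : Fin 3),
      deriv (fun s => deriv (fun r => Φ a r) s) t i
        = fderiv ℝ (fun x => Ω x t) (Φ a t) (Pi.single i 1))
    (q : (Fin 3 → ℝ) × ℝ) (i : Fin 3) :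
    pd dt3 (pd dt3 (cP Φ i)) q
      = fderiv ℝ (fun x => Ω x q.2) (Φ q.1 q.2) (Pi.single i 1) := by
  obtain ⟨a, t⟩ := q
  have h1 : (fun s => deriv (fun r => Φ a r) s)
      = fun s => (fun i => pd dt3 (cP Φ i) (a, s)) :=
    funext fun s => (hDt hΦ a s).deriv
  have h2 : HasDerivAt (fun s => (fun i => pd dt3 (cP Φ i) (a, s)))
      (fun i => pd dt3 (pd dt3 (cP Φ i)) (a, t)) t :=
    hasDerivAt_pi.2 fun i =>
      pd_time ((pd_diff (hcP hΦ i) dt3) (a, t))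
  have := hmotion a t i
  rw [h1, h2.deriv] at this
  exact this

-- chain rule for W = Ω ∘ (Φ, t)
theorem hWd (hΦ : ContDiff ℝ (⊤ : ℕ∞) (fun q : (Fin 3 → ℝ) × ℝ => Φ q.1 q.2))
    (hΩ : ContDiff ℝ 2 (fun q : (Fin 3 → ℝ) × ℝ => Ω q.1 q.2))
    (q : (Fin 3 → ℝ) × ℝ) (j : Fin 3) :
    pd (ds3 j) (fun q : (Fin 3 → ℝ) × ℝ => Ω (Φ q.1 q.2) q.2) q
      = ∑ i, pd (ds3 j) (cP Φ i) q
          * fderiv ℝ (fun x => Ω x q.2) (Φ q.1 q.2) (Pi.single i 1) := by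
  have hΦd : DifferentiableAt ℝ (fun q : (Fin 3 → ℝ) × ℝ => Φ q.1 q.2) q :=
    (hΦ.differentiable (by simp)) q
  have hΩd : ∀ p, DifferentiableAt ℝ (fun q : (Fin 3 → ℝ) × ℝ => Ω q.1 q.2) p :=
    fun p => (hΩ.differentiable two_ne_zero) p
  set D := fderiv ℝ (fun q : (Fin 3 → ℝ) × ℝ => Φ q.1 q.2) q with hD
  have hG : HasFDerivAt (fun q : (Fin 3 → ℝ) × ℝ => ((Φ q.1 q.2, q.2) : (Fin 3 → ℝ) × ℝ))
      (D.prod (ContinuousLinearMap.snd ℝ _ _)) q :=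
    hΦd.hasFDerivAt.prodMk hasFDerivAt_snd
  have hcomp : HasFDerivAt (fun q : (Fin 3 → ℝ) × ℝ => Ω (Φ q.1 q.2) q.2)
      ((fderiv ℝ (fun q : (Fin 3 → ℝ) × ℝ => Ω q.1 q.2) (Φ q.1 q.2, q.2)).comp
        (D.prod (ContinuousLinearMap.snd ℝ _ _))) q :=
    by have := (hΩd (Φ q.1 q.2, q.2)).hasFDerivAt.comp q hG; exact this
  have hproj : ∀ (i : Fin 3) (u : (Fin 3 → ℝ) × ℝ), pd u (cP Φ i) q = D u i := by
    intro i u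
    have hp : HasFDerivAt (cP Φ i) ((ContinuousLinearMap.proj i).comp D) q :=
      (ContinuousLinearMap.proj i : (Fin 3 → ℝ) →L[ℝ] ℝ).hasFDerivAt.comp q hΦd.hasFDerivAt
    show fderiv ℝ (cP Φ i) q u = _
    rw [hp.fderiv]
    rfl
  show fderiv ℝ (fun q : (Fin 3 → ℝ) × ℝ => Ω (Φ q.1 q.2) q.2) q (ds3 j) = _
  rw [hcomp.fderiv]
  have hsndj : (ContinuousLinearMap.snd ℝ (Fin 3 → ℝ) ℝ) (ds3 j) = 0 := rfl
  have hdecomp : ((D (ds3 j), (0:ℝ)) : (Fin 3 → ℝ) × ℝ)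
      = ∑ i, (D (ds3 j) i) • ((Pi.single i 1, 0) : (Fin 3 → ℝ) × ℝ) := by
    ext k
    · simp [Prod.fst_sum, Finset.sum_apply, Pi.single_apply]
    · simp [Prod.snd_sum]
  calc (fderiv ℝ (fun q : (Fin 3 → ℝ) × ℝ => Ω q.1 q.2) (Φ q.1 q.2, q.2))
        ((D.prod (ContinuousLinearMap.snd ℝ _ _)) (ds3 j))
      = (fderiv ℝ (fun q : (Fin 3 → ℝ) × ℝ => Ω q.1 q.2) (Φ q.1 q.2, q.2))
        (∑ i, (D (ds3 j) i) • ((Pi.single i 1, 0) : (Fin 3 → ℝ) × ℝ)) := by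
        rw [ContinuousLinearMap.prod_apply, hsndj, ← hdecomp]
    _ = ∑ i, (D (ds3 j) i) *
          (fderiv ℝ (fun q : (Fin 3 → ℝ) × ℝ => Ω q.1 q.2) (Φ q.1 q.2, q.2))
            ((Pi.single i 1, 0) : (Fin 3 → ℝ) × ℝ) := by
        rw [map_sum]
        exact Finset.sum_congr rfl fun i _ => by rw [map_smul]; rfl
    _ = ∑ i, pd (ds3 j) (cP Φ i) q
          * fderiv ℝ (fun x => Ω x q.2) (Φ q.1 q.2) (Pi.single i 1) := by
        refine Finset.sum_congr rfl fun i _ => ?_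
        rw [hproj i (ds3 j),
          pd_space (f := fun q : (Fin 3 → ℝ) × ℝ => Ω q.1 q.2) (hΩd _) (Pi.single i 1)]
        rfl

end Aux2
section Aux3
variable {Φ : (Fin 3 → ℝ) → ℝ → (Fin 3 → ℝ)} {Ω : (Fin 3 → ℝ) → ℝ → ℝ}

theorem hψC (hΦ : ContDiff ℝ (⊤ : ℕ∞) (fun q : (Fin 3 → ℝ) × ℝ => Φ q.1 q.2))
    (hΩ : ContDiff ℝ 2 (fun q : (Fin 3 → ℝ) × ℝ => Ω q.1 q.2)) :
    ContDiff ℝ 2 (cψ Φ Ω) := by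
  apply ContDiff.add
  · exact hΩ.comp ((hΦ.of_le (WithTop.coe_le_coe.mpr (le_top : (2:ℕ∞) ≤ ⊤))).prodMk contDiff_snd)
  · exact contDiff_const.mul <| ContDiff.sum fun i _ =>
      ((pd_contDiff (hcP hΦ i) dt3).of_le (WithTop.coe_le_coe.mpr (le_top : (2:ℕ∞) ≤ ⊤))).mul
        ((pd_contDiff (hcP hΦ i) dt3).of_le (WithTop.coe_le_coe.mpr (le_top : (2:ℕ∞) ≤ ⊤)))

theorem C1 (hΦ : ContDiff ℝ (⊤ : ℕ∞) (fun q : (Fin 3 → ℝ) × ℝ => Φ q.1 q.2))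
    (hΩ : ContDiff ℝ 2 (fun q : (Fin 3 → ℝ) × ℝ => Ω q.1 q.2))
    (hmotion : ∀ (a : Fin 3 → ℝ) (t : ℝ) (i : Fin 3),
      deriv (fun s => deriv (fun r => Φ a r) s) t i
        = fderiv ℝ (fun x => Ω x t) (Φ a t) (Pi.single i 1))
    (k : Fin 3) (q : (Fin 3 → ℝ) × ℝ) :
    pd dt3 (cV Φ k) q = pd (ds3 k) (cψ Φ Ω) q := by
  have hdS : ∀ (i : Fin 3) (u : (Fin 3 → ℝ) × ℝ),
      DifferentiableAt ℝ (pd u (cP Φ i)) q := fun i u => (pd_diff (hcP hΦ i) u) q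
  have hL : pd dt3 (cV Φ k) q
      = ∑ i, (pd dt3 (pd (ds3 k) (cP Φ i)) q * pd dt3 (cP Φ i) q
            + pd (ds3 k) (cP Φ i) q * pd dt3 (pd dt3 (cP Φ i)) q) := by
    show pd dt3 (fun x => ∑ i, pd (ds3 k) (cP Φ i) x * pd dt3 (cP Φ i) x) q = _
    rw [pd_sum (fun i => (hdS i _).fun_mul (hdS i _))]
    exact Finset.sum_congr rfl fun i _ => pd_mul (hdS i _) (hdS i _)
  have hWdiff : DifferentiableAt ℝ (fun q : (Fin 3 → ℝ) × ℝ => Ω (Φ q.1 q.2) q.2) q :=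
    ((hΩ.comp ((hΦ.of_le (WithTop.coe_le_coe.mpr (le_top : (2:ℕ∞) ≤ ⊤))).prodMk contDiff_snd)).differentiable two_ne_zero) q
  have hKdiff : DifferentiableAt ℝ
      (fun x : (Fin 3 → ℝ) × ℝ => ∑ i, pd dt3 (cP Φ i) x * pd dt3 (cP Φ i) x) q :=
    DifferentiableAt.fun_sum fun i _ => (hdS i _).fun_mul (hdS i _)
  have hR : pd (ds3 k) (cψ Φ Ω) q
      = pd (ds3 k) (fun q : (Fin 3 → ℝ) × ℝ => Ω (Φ q.1 q.2) q.2) q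
        + (1/2) * ∑ i, (pd (ds3 k) (pd dt3 (cP Φ i)) q * pd dt3 (cP Φ i) q
            + pd dt3 (cP Φ i) q * pd (ds3 k) (pd dt3 (cP Φ i)) q) := by
    show pd (ds3 k) (fun x => Ω (Φ x.1 x.2) x.2
        + (1/2) * ∑ i, pd dt3 (cP Φ i) x * pd dt3 (cP Φ i) x) q = _
    rw [pd_add hWdiff (hKdiff.const_mul _), pd_const_mul hKdiff,
      pd_sum (fun i => (hdS i _).fun_mul (hdS i _))]
    congr 2
    exact Finset.sum_congr rfl fun i _ => pd_mul (hdS i _) (hdS i _)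
  rw [hL, hR, hWd hΦ hΩ q k]
  have hswap : ∀ i, pd dt3 (pd (ds3 k) (cP Φ i)) q = pd (ds3 k) (pd dt3 (cP Φ i)) q :=
    fun i => pd_swap ((hcP hΦ i).of_le (WithTop.coe_le_coe.mpr (le_top : (2:ℕ∞) ≤ ⊤))) dt3 (ds3 k) q
  have hmm : ∀ i, pd dt3 (pd dt3 (cP Φ i)) q
      = fderiv ℝ (fun x => Ω x q.2) (Φ q.1 q.2) (Pi.single i 1) := fun i => hmot' hΦ hmotion q i
  simp only [hswap, hmm]
  rw [Finset.mul_sum, ← Finset.sum_add_distrib]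
  exact Finset.sum_congr rfl fun i _ => by ring

theorem curl_const (hΦ : ContDiff ℝ (⊤ : ℕ∞) (fun q : (Fin 3 → ℝ) × ℝ => Φ q.1 q.2))
    (hΩ : ContDiff ℝ 2 (fun q : (Fin 3 → ℝ) × ℝ => Ω q.1 q.2))
    (hmotion : ∀ (a : Fin 3 → ℝ) (t : ℝ) (i : Fin 3),
      deriv (fun s => deriv (fun r => Φ a r) s) t i
        = fderiv ℝ (fun x => Ω x t) (Φ a t) (Pi.single i 1))
    (j k : Fin 3) (a : Fin 3 → ℝ) (t : ℝ) :
    pd (ds3 j) (cV Φ k) (a, t) - pd (ds3 k) (cV Φ j) (a, t)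
      = pd (ds3 j) (cV Φ k) (a, 0) - pd (ds3 k) (cV Φ j) (a, 0) := by
  have hg : ∀ s, HasDerivAt
      (fun s => pd (ds3 j) (cV Φ k) (a, s) - pd (ds3 k) (cV Φ j) (a, s))
      (pd dt3 (pd (ds3 j) (cV Φ k)) (a, s) - pd dt3 (pd (ds3 k) (cV Φ j)) (a, s)) s :=
    fun s => ((pd_time ((pd_diff (hcV hΦ k) _) _)).sub (pd_time ((pd_diff (hcV hΦ j) _) _)))
  have hC1k : pd dt3 (cV Φ k) = pd (ds3 k) (cψ Φ Ω) := funext (C1 hΦ hΩ hmotion k)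
  have hC1j : pd dt3 (cV Φ j) = pd (ds3 j) (cψ Φ Ω) := funext (C1 hΦ hΩ hmotion j)
  have hzero : ∀ s, deriv
      (fun s => pd (ds3 j) (cV Φ k) (a, s) - pd (ds3 k) (cV Φ j) (a, s)) s = 0 := by
    intro s
    rw [(hg s).deriv, pd_swap ((hcV hΦ k).of_le (WithTop.coe_le_coe.mpr (le_top : (2:ℕ∞) ≤ ⊤))) dt3 (ds3 j) _,
      pd_swap ((hcV hΦ j).of_le (WithTop.coe_le_coe.mpr (le_top : (2:ℕ∞) ≤ ⊤))) dt3 (ds3 k) _, hC1k, hC1j,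
      pd_swap (hψC hΦ hΩ) (ds3 j) (ds3 k) _, sub_self]
  exact is_const_of_deriv_eq_zero (fun s => (hg s).differentiableAt) hzero t 0

end Aux3

/-- §6, equations (1)–(3): the Cauchy invariants. With
`v(a,t) = (DₐΦ(a,t))ᵀ ∂ₜΦ(a,t)` (components α, β, γ) and `u₀(a) = ∂ₜΦ(a,0)`, the
curl of `v` in the Lagrangian coordinates equals the curl of the initial velocity,
independently of `t`. -/
theorem hankel_cauchy_invariants
    (Φ : (Fin 3 → ℝ) → ℝ → (Fin 3 → ℝ)) (Ω : (Fin 3 → ℝ) → ℝ → ℝ)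
    (v : (Fin 3 → ℝ) → ℝ → (Fin 3 → ℝ)) (u₀ : (Fin 3 → ℝ) → (Fin 3 → ℝ))
    (hΦ : ContDiff ℝ (⊤ : ℕ∞) (fun q : (Fin 3 → ℝ) × ℝ => Φ q.1 q.2))
    (hΦ0 : ∀ a, Φ a 0 = a)
    (hΩ : ContDiff ℝ 2 (fun q : (Fin 3 → ℝ) × ℝ => Ω q.1 q.2))
    (hmotion : ∀ (a : Fin 3 → ℝ) (t : ℝ) (i : Fin 3),
      deriv (fun s => deriv (fun r => Φ a r) s) t i
        = fderiv ℝ (fun x => Ω x t) (Φ a t) (Pi.single i 1))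
    (hv : ∀ (a : Fin 3 → ℝ) (t : ℝ) (j : Fin 3),
      v a t j = ∑ i, fderiv ℝ (fun b => Φ b t i) a (Pi.single j 1)
        * deriv (fun s => Φ a s) t i)
    (hu₀ : ∀ a, u₀ a = deriv (fun s => Φ a s) 0) :
    ∀ (a : Fin 3 → ℝ) (t : ℝ),
      (fderiv ℝ (fun b => v b t 1) a (Pi.single 2 1)
          - fderiv ℝ (fun b => v b t 2) a (Pi.single 1 1)
        = fderiv ℝ (fun b => u₀ b 1) a (Pi.single 2 1)
          - fderiv ℝ (fun b => u₀ b 2) a (Pi.single 1 1)) ∧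
      (fderiv ℝ (fun b => v b t 2) a (Pi.single 0 1)
          - fderiv ℝ (fun b => v b t 0) a (Pi.single 2 1)
        = fderiv ℝ (fun b => u₀ b 2) a (Pi.single 0 1)
          - fderiv ℝ (fun b => u₀ b 0) a (Pi.single 2 1)) ∧
      (fderiv ℝ (fun b => v b t 0) a (Pi.single 1 1)
          - fderiv ℝ (fun b => v b t 1) a (Pi.single 0 1)
        = fderiv ℝ (fun b => u₀ b 0) a (Pi.single 1 1)
          - fderiv ℝ (fun b => u₀ b 1) a (Pi.single 0 1)) := by
  have hfv : ∀ (t : ℝ) (j k : Fin 3) (a : Fin 3 → ℝ),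
      fderiv ℝ (fun b => v b t k) a (Pi.single j 1) = pd (ds3 j) (cV Φ k) (a, t) := by
    intro t j k a
    have h : (fun b => v b t k) = fun b => cV Φ k (b, t) := funext fun b => hvV hΦ hv b t k
    rw [h, pd_space (((hcV hΦ k).differentiable (by simp)) (a, t)) (Pi.single j 1)]
    rfl
  have hu0v : ∀ kk : Fin 3, (fun b => u₀ b kk) = (fun b => v b 0 kk) := by
    intro kk
    funext b
    have hfd : ∀ i : Fin 3,
        fderiv ℝ (fun c => Φ c 0 i) b (Pi.single kk 1) = (Pi.single kk 1 : Fin 3 → ℝ) i := by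
      intro i
      have h0 : (fun c : Fin 3 → ℝ => Φ c 0 i) = fun c => c i :=
        funext fun c => by rw [hΦ0]
      have hp : HasFDerivAt (fun c : Fin 3 → ℝ => c i)
          (ContinuousLinearMap.proj i : (Fin 3 → ℝ) →L[ℝ] ℝ) b :=
        (ContinuousLinearMap.proj i : (Fin 3 → ℝ) →L[ℝ] ℝ).hasFDerivAt
      rw [h0, hp.fderiv]
      rfl
    show u₀ b kk = v b 0 kk
    rw [hu₀, hv]
    simp only [hfd]
    simp [Pi.single_apply]
  have hfu : ∀ (j kk : Fin 3) (a : Fin 3 → ℝ),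
      fderiv ℝ (fun b => u₀ b kk) a (Pi.single j 1) = pd (ds3 j) (cV Φ kk) (a, 0) := by
    intro j kk a
    rw [hu0v kk, hfv 0 j kk a]
  intro a t
  refine ⟨?_, ?_, ?_⟩
  · rw [hfv t 2 1 a, hfv t 1 2 a, hfu 2 1 a, hfu 1 2 a]
    exact curl_const hΦ hΩ hmotion 2 1 a t
  · rw [hfv t 0 2 a, hfv t 2 0 a, hfu 0 2 a, hfu 2 0 a]
    exact curl_const hΦ hΩ hmotion 0 2 a t
  · rw [hfv t 1 0 a, hfv t 0 1 a, hfu 1 0 a, hfu 0 1 a]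
    exact curl_const hΦ hΩ hmotion 1 0 a t
end

section
/- Let Φ : ℝ³ × ℝ → ℝ³ be a smooth flow map with Φ(a,0) = a for all a, and let Ω : ℝ³ × ℝ → ℝ be a C² function such that ∂ₜ²Φ(a,t) = (∇ₓΩ)(Φ(a,t), t) for all (a,t). Then circulation around material loops is conserved: for every closed C¹ curve γ : [0,1] → ℝ³ with γ(0) = γ(1), the function t ↦ ∫₀¹ ⟨ ∂ₜΦ(γ(s), t), d/ds [Φ(γ(s), t)] ⟩ ds is constant in t, and its value equals the initial circulation ∫₀¹ ⟨ u₀(γ(s)), γ'(s) ⟩ ds, where u₀(a) = ∂ₜΦ(a,0). -/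
open intervalIntegral

/-- §§8–9: conservation of circulation around material loops (Kelvin's theorem,
here predating Kelvin). For every closed C¹ curve `g`, the circulation of the
velocity around the transported loop `s ↦ Φ(g s, t)` is constant in `t` and equals
the initial circulation of `u₀(a) = ∂ₜΦ(a,0)` around `g`. -/
theorem hankel_circulation_conservation
    (Φ : (Fin 3 → ℝ) → ℝ → (Fin 3 → ℝ)) (Ω : (Fin 3 → ℝ) → ℝ → ℝ)
    (g : ℝ → (Fin 3 → ℝ))
    (hΦ : ContDiff ℝ (⊤ : ℕ∞) (fun q : (Fin 3 → ℝ) × ℝ => Φ q.1 q.2))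
    (hΦ0 : ∀ a, Φ a 0 = a)
    (hΩ : ContDiff ℝ 2 (fun q : (Fin 3 → ℝ) × ℝ => Ω q.1 q.2))
    (hmotion : ∀ (a : Fin 3 → ℝ) (t : ℝ) (i : Fin 3),
      deriv (fun s => deriv (fun r => Φ a r) s) t i
        = fderiv ℝ (fun x => Ω x t) (Φ a t) (Pi.single i 1))
    (hg : ContDiff ℝ 1 g) (hclosed : g 0 = g 1) :
    ∀ t : ℝ,
      (∫ s in (0:ℝ)..1, ∑ i,
          deriv (fun τ => Φ (g s) τ) t i * deriv (fun r => Φ (g r) t) s i)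
        = ∫ s in (0:ℝ)..1, ∑ i,
            deriv (fun τ => Φ (g s) τ) 0 i * deriv g s i := by
  classical
  set F : (Fin 3 → ℝ) × ℝ → (Fin 3 → ℝ) := fun q => Φ q.1 q.2 with hF_def
  have hΦ3 : ContDiff ℝ 3 F := hΦ.of_le (by decide)
  have hΦ2 : ContDiff ℝ 2 F := hΦ.of_le (by decide)
  have hΦd : Differentiable ℝ F := hΦ2.differentiable (by norm_num)
  have hgd : Differentiable ℝ g := hg.differentiable one_ne_zero
  -- the velocity field (in Lagrangian coordinates), as a function on space-time
  set u : (Fin 3 → ℝ) × ℝ → (Fin 3 → ℝ) :=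
    fun q => fderiv ℝ F q ((0 : Fin 3 → ℝ), (1 : ℝ)) with hu_def
  have hu2 : ContDiff ℝ 2 u :=
    (hΦ3.fderiv_right (by norm_num)).clm_apply contDiff_const
  have hud : Differentiable ℝ u := hu2.differentiable (by norm_num)
  have hfF2 : ContDiff ℝ 2 (fderiv ℝ F) := hΦ3.fderiv_right (by norm_num)
  have hfFd : Differentiable ℝ (fderiv ℝ F) := hfF2.differentiable (by norm_num)
  -- time derivative of the flow
  have key1 : ∀ (a : Fin 3 → ℝ) (t : ℝ), HasDerivAt (fun τ => Φ a τ) (u (a, t)) t := by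
    intro a t
    have hc : HasDerivAt (fun τ : ℝ => ((a, τ) : (Fin 3 → ℝ) × ℝ))
        ((0 : Fin 3 → ℝ), (1 : ℝ)) t := (hasDerivAt_const t a).prodMk (hasDerivAt_id t)
    exact (hΦd (a, t)).hasFDerivAt.comp_hasDerivAt t hc
  -- space derivative of the flow along the curve
  have key2 : ∀ (s t : ℝ), HasDerivAt (fun r => Φ (g r) t)
      (fderiv ℝ F (g s, t) (deriv g s, (0 : ℝ))) s := by
    intro s t
    have hc : HasDerivAt (fun r : ℝ => ((g r, t) : (Fin 3 → ℝ) × ℝ))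
        (deriv g s, (0 : ℝ)) s := ((hgd s).hasDerivAt).prodMk (hasDerivAt_const s t)
    exact (hΦd (g s, t)).hasFDerivAt.comp_hasDerivAt s hc
  -- derivative of `u` in time and along the curve
  have key4 : ∀ (a : Fin 3 → ℝ) (t : ℝ), HasDerivAt (fun τ => u (a, τ))
      (fderiv ℝ u (a, t) ((0 : Fin 3 → ℝ), (1 : ℝ))) t := by
    intro a t
    have hc : HasDerivAt (fun τ : ℝ => ((a, τ) : (Fin 3 → ℝ) × ℝ))
        ((0 : Fin 3 → ℝ), (1 : ℝ)) t := (hasDerivAt_const t a).prodMk (hasDerivAt_id t)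
    exact (hud (a, t)).hasFDerivAt.comp_hasDerivAt t hc
  have key5 : ∀ (s t : ℝ), HasDerivAt (fun r => u (g r, t))
      (fderiv ℝ u (g s, t) (deriv g s, (0 : ℝ))) s := by
    intro s t
    have hc : HasDerivAt (fun r : ℝ => ((g r, t) : (Fin 3 → ℝ) × ℝ))
        (deriv g s, (0 : ℝ)) s := ((hgd s).hasDerivAt).prodMk (hasDerivAt_const s t)
    exact (hud (g s, t)).hasFDerivAt.comp_hasDerivAt s hc
  -- the derivative of `u` in terms of the second derivative of `F`
  have hfu : ∀ (q v : (Fin 3 → ℝ) × ℝ),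
      fderiv ℝ u q v = fderiv ℝ (fderiv ℝ F) q v ((0 : Fin 3 → ℝ), (1 : ℝ)) := by
    intro q v
    have h1 : HasFDerivAt (fderiv ℝ F) (fderiv ℝ (fderiv ℝ F) q) q := (hfFd q).hasFDerivAt
    have h2 := (ContinuousLinearMap.apply ℝ (Fin 3 → ℝ)
      (((0 : Fin 3 → ℝ), (1 : ℝ)) : (Fin 3 → ℝ) × ℝ)).hasFDerivAt.comp q h1
    have h3 : fderiv ℝ u q = (ContinuousLinearMap.apply ℝ (Fin 3 → ℝ)
        (((0 : Fin 3 → ℝ), (1 : ℝ)) : (Fin 3 → ℝ) × ℝ)).comp (fderiv ℝ (fderiv ℝ F) q) :=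
      h2.fderiv
    rw [h3]
    rfl
  -- symmetry of second derivatives
  have hsymm : ∀ (q v w : (Fin 3 → ℝ) × ℝ),
      fderiv ℝ (fderiv ℝ F) q v w = fderiv ℝ (fderiv ℝ F) q w v := by
    intro q v w
    exact (hΦ3.contDiffAt.isSymmSndFDerivAt (by norm_num)).eq v w
  -- time derivative of the transported tangent vector
  have key3 : ∀ (s t : ℝ), HasDerivAt (fun τ => fderiv ℝ F (g s, τ) (deriv g s, (0 : ℝ)))
      (fderiv ℝ u (g s, t) (deriv g s, (0 : ℝ))) t := by
    intro s t
    have hc : HasDerivAt (fun τ : ℝ => ((g s, τ) : (Fin 3 → ℝ) × ℝ))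
        ((0 : Fin 3 → ℝ), (1 : ℝ)) t := (hasDerivAt_const t (g s)).prodMk (hasDerivAt_id t)
    have h2 : HasDerivAt (fun τ => fderiv ℝ F (g s, τ))
        (fderiv ℝ (fderiv ℝ F) (g s, t) ((0 : Fin 3 → ℝ), (1 : ℝ))) t :=
      (hfFd (g s, t)).hasFDerivAt.comp_hasDerivAt t hc
    have h3 : HasDerivAt (fun τ => fderiv ℝ F (g s, τ) (deriv g s, (0 : ℝ)))
        (fderiv ℝ (fderiv ℝ F) (g s, t) ((0 : Fin 3 → ℝ), (1 : ℝ)) (deriv g s, (0 : ℝ))) t :=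
      (ContinuousLinearMap.apply ℝ (Fin 3 → ℝ)
        ((deriv g s, (0 : ℝ)) : (Fin 3 → ℝ) × ℝ)).hasFDerivAt.comp_hasDerivAt t h2
    have e : fderiv ℝ (fderiv ℝ F) (g s, t) ((0 : Fin 3 → ℝ), (1 : ℝ)) (deriv g s, (0 : ℝ))
        = fderiv ℝ u (g s, t) (deriv g s, (0 : ℝ)) := by
      rw [hfu]; exact (hsymm _ _ _)
    exact e ▸ h3
  -- the slice `x ↦ Ω x t` is differentiable, with derivative given by the joint one
  have hΩd : Differentiable ℝ (fun q : (Fin 3 → ℝ) × ℝ => Ω q.1 q.2) :=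
    hΩ.differentiable (by norm_num)
  set NΩ : (Fin 3 → ℝ) × ℝ → Fin 3 → ℝ := fun q i =>
    fderiv ℝ (fun q : (Fin 3 → ℝ) × ℝ => Ω q.1 q.2) q ((Pi.single i 1 : Fin 3 → ℝ), (0 : ℝ))
    with hNΩ_def
  have hΩslice : ∀ (p : Fin 3 → ℝ) (t : ℝ), HasFDerivAt (fun x => Ω x t)
      ((fderiv ℝ (fun q : (Fin 3 → ℝ) × ℝ => Ω q.1 q.2) (p, t)).comp
        ((ContinuousLinearMap.id ℝ (Fin 3 → ℝ)).prod 0)) p := by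
    intro p t
    have hc : HasFDerivAt (fun x : Fin 3 → ℝ => ((x, t) : (Fin 3 → ℝ) × ℝ))
        ((ContinuousLinearMap.id ℝ (Fin 3 → ℝ)).prod 0) p :=
      (hasFDerivAt_id p).prodMk (hasFDerivAt_const t p)
    exact (hΩd (p, t)).hasFDerivAt.comp p hc
  have hgradΩ : ∀ (p : Fin 3 → ℝ) (t : ℝ) (i : Fin 3),
      fderiv ℝ (fun x => Ω x t) p (Pi.single i 1) = NΩ (p, t) i := by
    intro p t i
    rw [(hΩslice p t).fderiv]
    simp [hNΩ_def, ContinuousLinearMap.comp_apply, ContinuousLinearMap.prod_apply]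
  -- the motion equation, in terms of `u`
  have hmot : ∀ (a : Fin 3 → ℝ) (t : ℝ) (i : Fin 3),
      fderiv ℝ u (a, t) ((0 : Fin 3 → ℝ), (1 : ℝ)) i = NΩ (Φ a t, t) i := by
    intro a t i
    have e1 : (fun σ => deriv (fun r => Φ a r) σ) = fun σ => u (a, σ) :=
      funext fun σ => (key1 a σ).deriv
    have h := hmotion a t i
    rw [e1, (key4 a t).deriv, hgradΩ] at h
    exact h
  -- expansion of a linear functional against coordinates
  have hexpand : ∀ (L : ((Fin 3 → ℝ) × ℝ) →L[ℝ] ℝ) (x : Fin 3 → ℝ),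
      L (x, (0 : ℝ)) = ∑ i, x i * L ((Pi.single i 1 : Fin 3 → ℝ), (0 : ℝ)) := by
    intro L x
    have h1 : x = ∑ i, x i • (Pi.single i 1 : Fin 3 → ℝ) := by
      funext j
      simp [Finset.sum_apply, Pi.single_apply]
    have hx : ((x, (0 : ℝ)) : (Fin 3 → ℝ) × ℝ)
        = ∑ i, x i • (((Pi.single i 1 : Fin 3 → ℝ), (0 : ℝ)) : (Fin 3 → ℝ) × ℝ) := by
      rw [Prod.ext_iff]
      constructor
      · rw [Prod.fst_sum]
        simpa using h1
      · rw [Prod.snd_sum]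
        simp
    rw [hx, map_sum]
    refine Finset.sum_congr rfl fun i _ => ?_
    rw [map_smul, smul_eq_mul]
  -- the integrands
  set G : ℝ → ℝ → ℝ := fun s t => ∑ i,
      u (g s, t) i * fderiv ℝ F (g s, t) (deriv g s, (0 : ℝ)) i with hG_def
  set dG : ℝ → ℝ → ℝ := fun s t => ∑ i,
      (NΩ (Φ (g s) t, t) i * fderiv ℝ F (g s, t) (deriv g s, (0 : ℝ)) i
        + u (g s, t) i * fderiv ℝ u (g s, t) (deriv g s, (0 : ℝ)) i) with hdG_def
  set H : ℝ → ℝ → ℝ := fun s t =>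
      Ω (Φ (g s) t) t + (1 / 2) * ∑ i, (u (g s, t) i) ^ 2 with hH_def
  -- time derivative of the integrand
  have hGt : ∀ (s t : ℝ), HasDerivAt (fun τ => G s τ) (dG s t) t := by
    intro s t
    have hterm : ∀ i : Fin 3, HasDerivAt
        (fun τ => u (g s, τ) i * fderiv ℝ F (g s, τ) (deriv g s, (0 : ℝ)) i)
        (NΩ (Φ (g s) t, t) i * fderiv ℝ F (g s, t) (deriv g s, (0 : ℝ)) i
          + u (g s, t) i * fderiv ℝ u (g s, t) (deriv g s, (0 : ℝ)) i) t := by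
      intro i
      have h1 : HasDerivAt (fun τ => u (g s, τ) i)
          (fderiv ℝ u (g s, t) ((0 : Fin 3 → ℝ), (1 : ℝ)) i) t :=
        (ContinuousLinearMap.proj (R := ℝ) (φ := fun _ : Fin 3 => ℝ)
          i).hasFDerivAt.comp_hasDerivAt t (key4 (g s) t)
      have h2 : HasDerivAt (fun τ => fderiv ℝ F (g s, τ) (deriv g s, (0 : ℝ)) i)
          (fderiv ℝ u (g s, t) (deriv g s, (0 : ℝ)) i) t :=
        (ContinuousLinearMap.proj (R := ℝ) (φ := fun _ : Fin 3 => ℝ)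
          i).hasFDerivAt.comp_hasDerivAt t (key3 s t)
      rw [hmot (g s) t i] at h1
      exact h1.mul h2
    have hsum := HasDerivAt.fun_sum (fun i (_ : i ∈ Finset.univ) => hterm i)
    simpa [hG_def, hdG_def] using hsum
  -- space derivative of the "pressure head" `H`
  have hHs : ∀ (t s : ℝ), HasDerivAt (fun r => H r t) (dG s t) s := by
    intro t s
    have hA : HasDerivAt (fun r => Ω (Φ (g r) t) t)
        (∑ i, NΩ (Φ (g s) t, t) i * fderiv ℝ F (g s, t) (deriv g s, (0 : ℝ)) i) s := by
      have h := (hΩslice (Φ (g s) t) t).comp_hasDerivAt s (key2 s t)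
      have e : ((fderiv ℝ (fun q : (Fin 3 → ℝ) × ℝ => Ω q.1 q.2) (Φ (g s) t, t)).comp
            ((ContinuousLinearMap.id ℝ (Fin 3 → ℝ)).prod 0))
            (fderiv ℝ F (g s, t) (deriv g s, (0 : ℝ)))
          = ∑ i, NΩ (Φ (g s) t, t) i * fderiv ℝ F (g s, t) (deriv g s, (0 : ℝ)) i := by
        rw [ContinuousLinearMap.comp_apply]
        rw [show ((ContinuousLinearMap.id ℝ (Fin 3 → ℝ)).prod 0)
            (fderiv ℝ F (g s, t) (deriv g s, (0 : ℝ)))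
            = ((fderiv ℝ F (g s, t) (deriv g s, (0 : ℝ)) : Fin 3 → ℝ), (0 : ℝ)) from rfl]
        rw [hexpand]
        refine Finset.sum_congr rfl fun i _ => ?_
        simp only [hNΩ_def]
        ring
      exact e ▸ h
    have hB : HasDerivAt (fun r => (1 / 2 : ℝ) * ∑ i, (u (g r, t) i) ^ 2)
        (∑ i, u (g s, t) i * fderiv ℝ u (g s, t) (deriv g s, (0 : ℝ)) i) s := by
      have hterm : ∀ i : Fin 3, HasDerivAt (fun r => (u (g r, t) i) ^ 2)
          (2 * u (g s, t) i * fderiv ℝ u (g s, t) (deriv g s, (0 : ℝ)) i) s := by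
        intro i
        have h1 : HasDerivAt (fun r => u (g r, t) i)
            (fderiv ℝ u (g s, t) (deriv g s, (0 : ℝ)) i) s :=
          (ContinuousLinearMap.proj (R := ℝ) (φ := fun _ : Fin 3 => ℝ)
            i).hasFDerivAt.comp_hasDerivAt s (key5 s t)
        simpa using h1.fun_pow 2
      have hsum := HasDerivAt.fun_sum (fun i (_ : i ∈ Finset.univ) => hterm i)
      have h2 := hsum.const_mul (1 / 2 : ℝ)
      refine h2.congr_deriv ?_
      rw [Finset.mul_sum]
      exact Finset.sum_congr rfl fun i _ => by ring
    have h := hA.add hB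
    have e : dG s t = (∑ i, NΩ (Φ (g s) t, t) i * fderiv ℝ F (g s, t) (deriv g s, (0 : ℝ)) i)
        + ∑ i, u (g s, t) i * fderiv ℝ u (g s, t) (deriv g s, (0 : ℝ)) i := by
      rw [hdG_def]
      exact Finset.sum_add_distrib
    rw [hH_def]
    rw [e]
    exact h
  -- continuity facts
  have cgp : Continuous fun p : ℝ × ℝ => ((g p.1, p.2) : (Fin 3 → ℝ) × ℝ) :=
    (hg.continuous.comp continuous_fst).prodMk continuous_snd
  have cu : Continuous fun p : ℝ × ℝ => u (g p.1, p.2) := hu2.continuous.comp cgp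
  have cdg : Continuous (deriv g) := hg.continuous_deriv le_rfl
  have cvec : Continuous fun p : ℝ × ℝ => ((deriv g p.1, (0 : ℝ)) : (Fin 3 → ℝ) × ℝ) :=
    (cdg.comp continuous_fst).prodMk continuous_const
  have cfdF : Continuous (fderiv ℝ F) := hfF2.continuous
  have cw : Continuous fun p : ℝ × ℝ => fderiv ℝ F (g p.1, p.2) (deriv g p.1, (0 : ℝ)) :=
    (cfdF.comp cgp).clm_apply cvec
  have cfu : Continuous (fderiv ℝ u) := (hu2.fderiv_right (m := 1) (by norm_num)).continuous
  have cA : Continuous fun p : ℝ × ℝ => fderiv ℝ u (g p.1, p.2) (deriv g p.1, (0 : ℝ)) :=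
    (cfu.comp cgp).clm_apply cvec
  have cPhi : Continuous fun p : ℝ × ℝ => ((Φ (g p.1) p.2, p.2) : (Fin 3 → ℝ) × ℝ) :=
    (hΦ.continuous.comp cgp).prodMk continuous_snd
  have cNfull : Continuous (fderiv ℝ (fun q : (Fin 3 → ℝ) × ℝ => Ω q.1 q.2)) :=
    (hΩ.fderiv_right (m := 1) (by norm_num)).continuous
  have cN : ∀ i : Fin 3, Continuous fun p : ℝ × ℝ => NΩ (Φ (g p.1) p.2, p.2) i := by
    intro i
    exact (cNfull.comp cPhi).clm_apply continuous_const
  have cG2 : Continuous fun p : ℝ × ℝ => G p.1 p.2 := by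
    simp only [hG_def]
    exact continuous_finset_sum _ fun i _ =>
      ((continuous_apply i).comp cu).mul ((continuous_apply i).comp cw)
  have cdG2 : Continuous fun p : ℝ × ℝ => dG p.1 p.2 := by
    simp only [hdG_def]
    exact continuous_finset_sum _ fun i _ =>
      ((cN i).mul ((continuous_apply i).comp cw)).add
        (((continuous_apply i).comp cu).mul ((continuous_apply i).comp cA))
  have cGt : ∀ t : ℝ, Continuous fun s => G s t := fun t =>
    cG2.comp (continuous_id.prodMk continuous_const)
  have cdGt : ∀ t : ℝ, Continuous fun s => dG s t := fun t =>
    cdG2.comp (continuous_id.prodMk continuous_const)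
  -- the integral of `dG` over the loop vanishes
  have hFTC : ∀ t : ℝ, (∫ s in (0:ℝ)..1, dG s t) = 0 := by
    intro t
    rw [intervalIntegral.integral_eq_sub_of_hasDerivAt (fun s _ => hHs t s)
      ((cdGt t).intervalIntegrable 0 1)]
    rw [hH_def]
    simp only [hclosed]
    ring
  -- derivative of the circulation in time is zero
  have hF' : ∀ t₀ : ℝ, HasDerivAt (fun t => ∫ s in (0:ℝ)..1, G s t) 0 t₀ := by
    intro t₀
    obtain ⟨C, hC⟩ := ((isCompact_uIcc (a := (0:ℝ)) (b := 1)).prod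
      (isCompact_closedBall t₀ 1)).exists_bound_of_continuousOn cdG2.continuousOn
    have h := intervalIntegral.hasDerivAt_integral_of_dominated_loc_of_deriv_le
      (F := fun t s => G s t) (F' := fun t s => dG s t) (x₀ := t₀) (a := 0) (b := 1)
      (bound := fun _ => C) (μ := MeasureTheory.volume) (s := Metric.ball t₀ 1) (Metric.ball_mem_nhds t₀ one_pos)
      (Filter.Eventually.of_forall fun t => (cGt t).aestronglyMeasurable)
      ((cGt t₀).intervalIntegrable 0 1)
      (cdGt t₀).aestronglyMeasurable
      (Filter.Eventually.of_forall fun s hs x hx =>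
        hC (s, x) ⟨Set.uIoc_subset_uIcc hs, Metric.ball_subset_closedBall hx⟩)
      intervalIntegrable_const
      (Filter.Eventually.of_forall fun s _ x _ => hGt s x)
    have h2 := h.2
    rw [hFTC t₀] at h2
    exact h2
  have hconst : ∀ t : ℝ, (∫ s in (0:ℝ)..1, G s t) = ∫ s in (0:ℝ)..1, G s 0 := fun t =>
    is_const_of_deriv_eq_zero (fun x => (hF' x).differentiableAt) (fun x => (hF' x).deriv) t 0
  -- rewrite the two integrands of the statement
  intro t
  have lhs_eq : (fun s => ∑ i, deriv (fun τ => Φ (g s) τ) t i * deriv (fun r => Φ (g r) t) s i)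
      = fun s => G s t := by
    funext s
    rw [hG_def, (key1 (g s) t).deriv, (key2 s t).deriv]
  have rhs_eq : (fun s => ∑ i, deriv (fun τ => Φ (g s) τ) 0 i * deriv g s i)
      = fun s => G s 0 := by
    funext s
    rw [hG_def, (key1 (g s) 0).deriv]
    have hgid : (fun r => Φ (g r) 0) = g := funext fun r => hΦ0 (g r)
    have e : deriv g s = fderiv ℝ F (g s, 0) (deriv g s, (0 : ℝ)) := by
      rw [← (key2 s 0).deriv, hgid]
    rw [e]
  rw [lhs_eq, rhs_eq]
  exact hconst t
end

section
/- Let F = (ξ, η, ζ) : ℝ³ → ℝ³ be a C¹ vector field and σ : ℝ² → ℝ³ a C² map. Then Stokes' formula holds for the unit square: ∫₀¹ ⟨F(σ(s,0)), ∂₁σ(s,0)⟩ ds + ∫₀¹ ⟨F(σ(1,τ)), ∂₂σ(1,τ)⟩ dτ − ∫₀¹ ⟨F(σ(s,1)), ∂₁σ(s,1)⟩ ds − ∫₀¹ ⟨F(σ(0,τ)), ∂₂σ(0,τ)⟩ dτ = ∬_{[0,1]²} ⟨ (curl F)(σ(s,τ)), ∂₁σ(s,τ) × ∂₂σ(s,τ)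 ⟩ ds dτ. -/
open intervalIntegral

/-!
Green's theorem on the rectangle, applied to the pullback `φ^* F` of the 1-form `F · dx` along the
surface `φ(s, τ) = σ s τ`, turns the boundary integral into `∬ d(φ^* F)`. Since `d` commutes with
pullback (the second derivatives of `φ` cancel by the symmetry of `D²φ`), the integrand is
`⟨DF (∂₁φ), ∂₂φ⟩ - ⟨DF (∂₂φ), ∂₁φ⟩`, and in dimension three this antisymmetric part of `DF` is
`⟨curl F, ∂₁φ × ∂₂φ⟩`.
-/

/-- The cross product on `Fin 3 → ℝ`. -/
def cross3 (v w : Fin 3 → ℝ) : Fin 3 → ℝ :=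
  ![v 1 * w 2 - v 2 * w 1, v 2 * w 0 - v 0 * w 2, v 0 * w 1 - v 1 * w 0]

/-- The curl of a vector field on `Fin 3 → ℝ`:
`curl w = (∂₂w₃ − ∂₃w₂, ∂₃w₁ − ∂₁w₃, ∂₁w₂ − ∂₂w₁)`. -/
noncomputable def curl3 (F : (Fin 3 → ℝ) → (Fin 3 → ℝ)) (x : Fin 3 → ℝ) : Fin 3 → ℝ :=
  ![fderiv ℝ (fun y => F y 2) x (Pi.single 1 1) - fderiv ℝ (fun y => F y 1) x (Pi.single 2 1),
    fderiv ℝ (fun y => F y 0) x (Pi.single 2 1) - fderiv ℝ (fun y => F y 2) x (Pi.single 0 1),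
    fderiv ℝ (fun y => F y 1) x (Pi.single 0 1) - fderiv ℝ (fun y => F y 0) x (Pi.single 1 1)]

open Matrix

theorem integral2_green_prod_of_contDiff {E : Type*} [NormedAddCommGroup E] [NormedSpace ℝ E]
    [CompleteSpace E] {P Q : ℝ × ℝ → E} (hP : ContDiff ℝ 1 P) (hQ : ContDiff ℝ 1 Q)
    (a₁ a₂ b₁ b₂ : ℝ) :
    (∫ x in a₁..b₁, P (x, a₂)) + (∫ y in a₂..b₂, Q (b₁, y))
      - (∫ x in a₁..b₁, P (x, b₂)) - (∫ y in a₂..b₂, Q (a₁, y))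
    = ∫ x in a₁..b₁, ∫ y in a₂..b₂, fderiv ℝ Q (x, y) (1, 0) - fderiv ℝ P (x, y) (0, 1) := by
  have hdiv := MeasureTheory.integral2_divergence_prod_of_hasFDerivAt Q (-P) (fderiv ℝ Q)
    (-fderiv ℝ P) a₁ a₂ b₁ b₂ hQ.continuous.continuousOn hP.continuous.neg.continuousOn
    (fun x _ => (hQ.differentiable one_ne_zero x).hasFDerivAt)
    (fun x _ => (hP.differentiable one_ne_zero x).hasFDerivAt.neg)
    (((hQ.continuous_fderiv_apply one_ne_zero).comp (continuous_id.prodMk continuous_const)).add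
      ((hP.continuous_fderiv_apply one_ne_zero).comp
        (continuous_id.prodMk continuous_const)).neg
      |>.continuousOn.integrableOn_compact (isCompact_uIcc.prod isCompact_uIcc))
  simp only [Pi.neg_apply, _root_.neg_apply, ← sub_eq_add_neg,
    intervalIntegral.integral_neg] at hdiv
  rw [hdiv]
  abel

variable {E : Type*} [NormedAddCommGroup E] [NormedSpace ℝ E] {ι : Type*} [Fintype ι]

theorem DifferentiableAt.deriv_comp_prodMk_const {f : ℝ × ℝ → E} {s t : ℝ}
    (hf : DifferentiableAt ℝ f (s, t)) :
    deriv (fun s' => f (s', t)) s = fderiv ℝ f (s, t) (1, 0) :=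
  (hf.hasFDerivAt.comp_hasDerivAt s ((hasDerivAt_id s).prodMk (hasDerivAt_const s t))).deriv

theorem DifferentiableAt.deriv_comp_const_prodMk {f : ℝ × ℝ → E} {s t : ℝ}
    (hf : DifferentiableAt ℝ f (s, t)) :
    deriv (fun t' => f (s, t')) t = fderiv ℝ f (s, t) (0, 1) :=
  (hf.hasFDerivAt.comp_hasDerivAt t ((hasDerivAt_const t s).prodMk (hasDerivAt_id t))).deriv

theorem fderiv_dotProduct_apply {f g : E → ι → ℝ} {x : E} (hf : DifferentiableAt ℝ f x)
    (hg : DifferentiableAt ℝ g x) (v : E) :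
    fderiv ℝ (fun y => f y ⬝ᵥ g y) x v = fderiv ℝ f x v ⬝ᵥ g x + f x ⬝ᵥ fderiv ℝ g x v := by
  have hfi : ∀ i, DifferentiableAt ℝ (fun y => f y i) x := differentiableAt_pi.1 hf
  have hgi : ∀ i, DifferentiableAt ℝ (fun y => g y i) x := differentiableAt_pi.1 hg
  simp only [dotProduct]
  rw [fderiv_fun_sum (A := fun i y => f y i * g y i) fun i _ => (hfi i).mul (hgi i)]
  simp only [_root_.sum_apply, fderiv_fun_mul (hfi _) (hgi _), fderiv_apply hf, fderiv_apply hg,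
    _root_.add_apply, _root_.smul_apply, ContinuousLinearMap.comp_apply,
    ContinuousLinearMap.proj_apply, smul_eq_mul, ← Finset.sum_add_distrib]
  exact Finset.sum_congr rfl fun i _ => by ring

/-- The pullback `φ^* F` of the 1-form `∑ Fᵢ dxᵢ` along `φ`, evaluated on the constant field `w`. -/
noncomputable def pullbackForm (F : (ι → ℝ) → ι → ℝ) (φ : E → ι → ℝ) (w : E) (q : E) : ℝ :=
  F (φ q) ⬝ᵥ fderiv ℝ φ q w

theorem ContDiff.pullbackForm {F : (ι → ℝ) → ι → ℝ} {φ : E → ι → ℝ} (hF : ContDiff ℝ 1 F)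
    (hφ : ContDiff ℝ 2 φ) (w : E) : ContDiff ℝ 1 (pullbackForm F φ w) := by
  have hDφ : ContDiff ℝ 1 (fderiv ℝ φ) := hφ.fderiv_right le_rfl
  have hφ₁ : ContDiff ℝ 1 φ := hφ.of_le one_le_two
  unfold _root_.pullbackForm dotProduct
  fun_prop

theorem fderiv_pullbackForm_sub {F : (ι → ℝ) → ι → ℝ} {φ : E → ι → ℝ} {p : E}
    (hF : DifferentiableAt ℝ F (φ p)) (hφ : ContDiffAt ℝ 2 φ p) (v w : E) :
    fderiv ℝ (pullbackForm F φ w) p v - fderiv ℝ (pullbackForm F φ v) p w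
      = fderiv ℝ F (φ p) (fderiv ℝ φ p v) ⬝ᵥ fderiv ℝ φ p w
        - fderiv ℝ F (φ p) (fderiv ℝ φ p w) ⬝ᵥ fderiv ℝ φ p v := by
  have hφ' : DifferentiableAt ℝ φ p := hφ.differentiableAt two_ne_zero
  have hDφ : DifferentiableAt ℝ (fderiv ℝ φ) p :=
    (hφ.fderiv_right le_rfl).differentiableAt one_ne_zero
  have hform : ∀ u u', fderiv ℝ (pullbackForm F φ u') p u
      = fderiv ℝ F (φ p) (fderiv ℝ φ p u) ⬝ᵥ fderiv ℝ φ p u'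
        + F (φ p) ⬝ᵥ fderiv ℝ (fderiv ℝ φ) p u u' := by
    intro u u'
    unfold pullbackForm
    have hDφw : DifferentiableAt ℝ (fun q => fderiv ℝ φ q u') p :=
      hDφ.clm_apply (differentiableAt_const u')
    rw [fderiv_dotProduct_apply (f := fun q => F (φ q)) (hF.comp p hφ') hDφw,
      fderiv_fun_comp p hF hφ', fderiv_clm_apply hDφ (differentiableAt_const u')]
    simp
  rw [hform, hform, hφ.isSymmSndFDerivAt (by simp) v w]
  abel

theorem curl3_dotProduct_cross3 {F : (Fin 3 → ℝ) → (Fin 3 → ℝ)} {x : Fin 3 → ℝ}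
    (hF : DifferentiableAt ℝ F x) (u v : Fin 3 → ℝ) :
    curl3 F x ⬝ᵥ cross3 u v = fderiv ℝ F x u ⬝ᵥ v - fderiv ℝ F x v ⬝ᵥ u := by
  set L := fderiv ℝ F x
  have hL : ∀ w : Fin 3 → ℝ, L w = ∑ k, w k • L (Pi.single k 1) := fun w => by
    conv_lhs => rw [← Finset.univ_sum_single w]
    refine (map_sum L _ _).trans (Finset.sum_congr rfl fun k _ => ?_)
    rw [← map_smul, ← Pi.single_smul', smul_eq_mul, mul_one]
  simp only [curl3, fderiv_apply hF, ContinuousLinearMap.comp_apply, ContinuousLinearMap.proj_apply]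
  rw [hL u, hL v]
  simp only [dotProduct, cross3, Fin.sum_univ_three, Finset.sum_apply, Pi.smul_apply, smul_eq_mul,
    cons_val_zero, cons_val_one, cons_val_two, head_cons, tail_cons]
  ring

/-- §7, equation (1): the Kelvin–Stokes formula on (the image of) the unit square:
the line integral of `F` around the boundary equals the flux of `curl F` through
the surface `σ`. -/
theorem hankel_stokes_unit_square
    (F : (Fin 3 → ℝ) → (Fin 3 → ℝ)) (σ : ℝ → ℝ → (Fin 3 → ℝ))
    (hF : ContDiff ℝ 1 F)
    (hσ : ContDiff ℝ 2 (fun q : ℝ × ℝ => σ q.1 q.2)) :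
    (∫ s in (0:ℝ)..1, ∑ i, F (σ s 0) i * deriv (fun s' => σ s' 0) s i)
      + (∫ τ in (0:ℝ)..1, ∑ i, F (σ 1 τ) i * deriv (fun τ' => σ 1 τ') τ i)
      - (∫ s in (0:ℝ)..1, ∑ i, F (σ s 1) i * deriv (fun s' => σ s' 1) s i)
      - (∫ τ in (0:ℝ)..1, ∑ i, F (σ 0 τ) i * deriv (fun τ' => σ 0 τ') τ i)
    = ∫ s in (0:ℝ)..1, ∫ τ in (0:ℝ)..1, ∑ i,
        curl3 F (σ s τ) i
          * cross3 (deriv (fun s' => σ s' τ) s) (deriv (fun τ' => σ s τ') τ) i := by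
  set φ : ℝ × ℝ → Fin 3 → ℝ := fun q => σ q.1 q.2
  have hφ : Differentiable ℝ φ := hσ.differentiable two_ne_zero
  have hσ₁ : ∀ s τ, deriv (fun s' => σ s' τ) s = fderiv ℝ φ (s, τ) (1, 0) :=
    fun s τ => (hφ (s, τ)).deriv_comp_prodMk_const
  have hσ₂ : ∀ s τ, deriv (fun τ' => σ s τ') τ = fderiv ℝ φ (s, τ) (0, 1) :=
    fun s τ => (hφ (s, τ)).deriv_comp_const_prodMk
  simp only [hσ₁, hσ₂]
  refine (integral2_green_prod_of_contDiff (hF.pullbackForm hσ (1, 0)) (hF.pullbackForm hσ (0, 1))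
    0 0 1 1).trans (integral_congr fun s _ => integral_congr fun τ _ => ?_)
  exact (fderiv_pullbackForm_sub (hF.differentiable one_ne_zero _) hσ.contDiffAt _ _).trans
    (curl3_dotProduct_cross3 (hF.differentiable one_ne_zero _) _ _).symm
end

section
/- Let Φ : ℝ³ × ℝ → ℝ³ be a smooth flow map with Φ(a,0) = a, such that Φ(·,t) is a diffeomorphism of ℝ³ for every t; let u : ℝ³ × ℝ → ℝ³ be the C¹ Eulerian velocity field, i.e. u(Φ(a,t), t) = ∂ₜΦ(a,t); and let Ω : ℝ³ × ℝ → ℝ be a C² function with ∂ₜ²Φ(a,t) = (∇ₓΩ)(Φ(a,t), t) for all (a,t). Then the flux of vorticity through a material surface is conserved: for every C² map σ : [0,1]² → ℝ³, writing Σ_t(s,τ) = Φ(σ(s,τ), t), the function t ↦ ∬_{[0,1]²} ⟨ (curl u(·,t))(Σ_t(s,τ)), ∂_s Σ_t(s,τ) × ∂_τ Σ_t(s,τ) ⟩ ds dτ is constant in t. -/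
open intervalIntegral

section helpers

variable {E : Type*} [NormedAddCommGroup E] [NormedSpace ℝ E]

theorem my_swap {F : E → ℝ} (hF : ContDiff ℝ 2 F) (p v w : E) :
    fderiv ℝ (fun x => fderiv ℝ F x v) p w = fderiv ℝ (fun x => fderiv ℝ F x w) p v := by
  have hd : DifferentiableAt ℝ (fderiv ℝ F) p := by
    have : ContDiff ℝ 1 (fderiv ℝ F) := hF.fderiv_right (le_refl _)
    exact this.differentiable one_ne_zero p
  have h1 : ∀ v w : E, fderiv ℝ (fun x => fderiv ℝ F x v) p w = fderiv ℝ (fderiv ℝ F) p w v := by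
    intro v w
    rw [fderiv_clm_apply hd (differentiableAt_const v)]
    simp
  rw [h1, h1]
  have hsymm : IsSymmSndFDerivAt ℝ F p := by
    apply ContDiffAt.isSymmSndFDerivAt hF.contDiffAt
    norm_num
  exact hsymm w v

theorem clm_sum3 (L : (Fin 3 → ℝ) →L[ℝ] ℝ) (v : Fin 3 → ℝ) :
    L v = ∑ i, v i * L (Pi.single i 1) := by
  have h : v = ∑ i, v i • (Pi.single i 1 : Fin 3 → ℝ) := by
    funext j
    rw [Finset.sum_apply]
    fin_cases j <;> simp [Pi.single_apply, Fin.sum_univ_three]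
  calc L v = L (∑ i, v i • (Pi.single i 1 : Fin 3 → ℝ)) := by rw [← h]
    _ = ∑ i, v i * L (Pi.single i 1) := by rw [map_sum]; simp [map_smul]

variable {G : Type*} [NormedAddCommGroup G] [NormedSpace ℝ G]

theorem hasDerivAt_lineS {F : ℝ × ℝ × ℝ → G} {s τ t : ℝ}
    (hF : DifferentiableAt ℝ F (s, τ, t)) :
    HasDerivAt (fun x => F (x, τ, t)) (fderiv ℝ F (s, τ, t) (1, 0, 0)) s := by
  have hline : HasDerivAt (fun x : ℝ => (x, τ, t)) ((1:ℝ), (0:ℝ), (0:ℝ)) s :=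
    HasDerivAt.prodMk (hasDerivAt_id s) (hasDerivAt_const s (τ, t))
  exact hF.hasFDerivAt.comp_hasDerivAt s hline

theorem hasDerivAt_lineT2 {F : ℝ × ℝ × ℝ → G} {s τ t : ℝ}
    (hF : DifferentiableAt ℝ F (s, τ, t)) :
    HasDerivAt (fun x => F (s, x, t)) (fderiv ℝ F (s, τ, t) (0, 1, 0)) τ := by
  have hline : HasDerivAt (fun x : ℝ => (s, x, t)) ((0:ℝ), (1:ℝ), (0:ℝ)) τ :=
    HasDerivAt.prodMk (hasDerivAt_const τ s) (HasDerivAt.prodMk (hasDerivAt_id τ) (hasDerivAt_const τ t))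
  exact hF.hasFDerivAt.comp_hasDerivAt τ hline

theorem hasDerivAt_lineT3 {F : ℝ × ℝ × ℝ → G} {s τ t : ℝ}
    (hF : DifferentiableAt ℝ F (s, τ, t)) :
    HasDerivAt (fun x => F (s, τ, x)) (fderiv ℝ F (s, τ, t) (0, 0, 1)) t := by
  have hline : HasDerivAt (fun x : ℝ => (s, τ, x)) ((0:ℝ), (0:ℝ), (1:ℝ)) t :=
    HasDerivAt.prodMk (hasDerivAt_const t s) (HasDerivAt.prodMk (hasDerivAt_const t τ) (hasDerivAt_id t))
  exact hF.hasFDerivAt.comp_hasDerivAt t hline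

theorem hasDerivAt_lineR {F : (Fin 3 → ℝ) × ℝ → G} {a : Fin 3 → ℝ} {t : ℝ}
    (hF : DifferentiableAt ℝ F (a, t)) :
    HasDerivAt (fun r => F (a, r)) (fderiv ℝ F (a, t) (0, 1)) t := by
  have hline : HasDerivAt (fun r : ℝ => (a, r)) ((0 : Fin 3 → ℝ), (1:ℝ)) t :=
    HasDerivAt.prodMk (hasDerivAt_const t a) (hasDerivAt_id t)
  exact hF.hasFDerivAt.comp_hasDerivAt t hline

theorem hasDerivAt_chain3 {F : (Fin 3 → ℝ) → ℝ} {c : ℝ → Fin 3 → ℝ} {a : Fin 3 → ℝ} {s : ℝ}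
    (hF : DifferentiableAt ℝ F (c s)) (hc : HasDerivAt c a s) :
    HasDerivAt (fun x => F (c x)) (∑ k, a k * fderiv ℝ F (c s) (Pi.single k 1)) s := by
  have := hF.hasFDerivAt.comp_hasDerivAt s hc
  rwa [clm_sum3] at this

end helpers

theorem integrand_indep
    (Φ : (Fin 3 → ℝ) → ℝ → (Fin 3 → ℝ)) (u : (Fin 3 → ℝ) → ℝ → (Fin 3 → ℝ))
    (Ω : (Fin 3 → ℝ) → ℝ → ℝ) (σ : ℝ → ℝ → (Fin 3 → ℝ))
    (hΦ : ContDiff ℝ (⊤ : ℕ∞) (fun q : (Fin 3 → ℝ) × ℝ => Φ q.1 q.2))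
    (hu : ContDiff ℝ 1 (fun q : (Fin 3 → ℝ) × ℝ => u q.1 q.2))
    (huΦ : ∀ a t, u (Φ a t) t = deriv (fun s => Φ a s) t)
    (hΩ : ContDiff ℝ 2 (fun q : (Fin 3 → ℝ) × ℝ => Ω q.1 q.2))
    (hmotion : ∀ (a : Fin 3 → ℝ) (t : ℝ) (i : Fin 3),
      deriv (fun s => deriv (fun r => Φ a r) s) t i
        = fderiv ℝ (fun x => Ω x t) (Φ a t) (Pi.single i 1))
    (hσ : ContDiff ℝ 2 (fun q : ℝ × ℝ => σ q.1 q.2))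
    (s τ : ℝ) :
    ∀ t t' : ℝ,
      (∑ i, curl3 (fun x => u x t) (Φ (σ s τ) t) i
            * cross3 (deriv (fun s' => Φ (σ s' τ) t) s)
                (deriv (fun τ' => Φ (σ s τ') t) τ) i)
        = ∑ i, curl3 (fun x => u x t') (Φ (σ s τ) t') i
              * cross3 (deriv (fun s' => Φ (σ s' τ) t') s)
                  (deriv (fun τ' => Φ (σ s τ') t') τ) i := by
  have h12 : (1 : WithTop ℕ∞) ≤ 2 := by norm_num
  have h2t : (2 : WithTop ℕ∞) ≤ ⊤ := le_top
  have h21 : ((1 : WithTop ℕ∞) + 1) ≤ 2 := by norm_num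
  have hΦi : ∀ i, ContDiff ℝ (⊤ : ℕ∞) (fun z : (Fin 3 → ℝ) × ℝ => Φ z.1 z.2 i) :=
    fun i => (contDiff_pi.1 hΦ) i
  have hm : ContDiff ℝ 2 (fun p : ℝ × ℝ × ℝ => ((σ p.1 p.2.1 : Fin 3 → ℝ), p.2.2)) := by
    apply ContDiff.prodMk
    · exact hσ.comp (contDiff_fst.prodMk (contDiff_fst.comp contDiff_snd))
    · exact contDiff_snd.comp contDiff_snd
  set Q : Fin 3 → (ℝ × ℝ × ℝ) → ℝ := fun i p => Φ (σ p.1 p.2.1) p.2.2 i with hQ_def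
  have hQ : ∀ i, ContDiff ℝ 2 (Q i) := fun i => ((hΦi i).of_le (by exact WithTop.coe_le_coe.mpr (le_top : (2:ℕ∞) ≤ ⊤))).comp hm
  set G : Fin 3 → ((Fin 3 → ℝ) × ℝ) → ℝ :=
    fun i z => fderiv ℝ (fun w : (Fin 3 → ℝ) × ℝ => Φ w.1 w.2 i) z ((0 : Fin 3 → ℝ), (1:ℝ))
    with hG_def
  have hG : ∀ i, ContDiff ℝ 2 (G i) :=
    fun i => (((hΦi i).fderiv_right (WithTop.coe_le_coe.mpr le_top)).clm_apply contDiff_const)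
  set K : Fin 3 → (ℝ × ℝ × ℝ) → ℝ := fun i p => G i (σ p.1 p.2.1, p.2.2) with hK_def
  have hK : ∀ i, ContDiff ℝ 2 (K i) := fun i => (hG i).comp hm
  -- the time derivative of the flow, componentwise
  have F1 : ∀ (i : Fin 3) (a : Fin 3 → ℝ) (t : ℝ),
      HasDerivAt (fun r => Φ a r i) (G i (a, t)) t := by
    intro i a t
    exact hasDerivAt_lineR (((hΦi i).differentiable (by simp)) (a, t))
  have F1v : ∀ (a : Fin 3 → ℝ) (t : ℝ),
      HasDerivAt (fun r => Φ a r) (fun i => G i (a, t)) t :=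
    fun a t => hasDerivAt_pi.2 (fun i => F1 i a t)
  have F1' : ∀ (a : Fin 3 → ℝ) (t : ℝ), deriv (fun r => Φ a r) t = fun i => G i (a, t) :=
    fun a t => (F1v a t).deriv
  -- the Eulerian field along the flow
  have H1 : ∀ (i : Fin 3) (p : ℝ × ℝ × ℝ), u (Φ (σ p.1 p.2.1) p.2.2) p.2.2 i = K i p := by
    intro i p
    have h := huΦ (σ p.1 p.2.1) p.2.2
    rw [F1'] at h
    exact congrFun h i
  -- time partial of Q is K
  have F2 : ∀ (i : Fin 3) (p : ℝ × ℝ × ℝ),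
      fderiv ℝ (Q i) p ((0:ℝ), (0:ℝ), (1:ℝ)) = K i p := by
    intro i p
    obtain ⟨s', τ', t'⟩ := p
    have h1 : HasDerivAt (fun x => Q i (s', τ', x))
        (fderiv ℝ (Q i) (s', τ', t') (0, 0, 1)) t' :=
      hasDerivAt_lineT3 (((hQ i).differentiable two_ne_zero) _)
    have h2 : HasDerivAt (fun x => Φ (σ s' τ') x i) (G i (σ s' τ', t')) t' := F1 i (σ s' τ') t'
    exact h1.unique h2
  -- the "pressure gradient": S i z = ∂_i Ω at z, via the joint derivative
  set S : Fin 3 → ((Fin 3 → ℝ) × ℝ) → ℝ :=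
    fun i z => fderiv ℝ (fun w : (Fin 3 → ℝ) × ℝ => Ω w.1 w.2) z
      ((Pi.single i 1 : Fin 3 → ℝ), (0:ℝ)) with hS_def
  have hS : ∀ i, ContDiff ℝ 1 (S i) :=
    fun i => (hΩ.fderiv_right h21).clm_apply contDiff_const
  have W_eq : ∀ (i : Fin 3) (x : Fin 3 → ℝ) (t : ℝ),
      fderiv ℝ (fun y => Ω y t) x (Pi.single i 1) = S i (x, t) := by
    intro i x t
    have hΩd : DifferentiableAt ℝ (fun w : (Fin 3 → ℝ) × ℝ => Ω w.1 w.2) (x, t) :=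
      (hΩ.differentiable two_ne_zero) _
    have hline : HasFDerivAt (fun y : Fin 3 → ℝ => ((y, t) : (Fin 3 → ℝ) × ℝ))
        ((ContinuousLinearMap.id ℝ (Fin 3 → ℝ)).prod 0) x :=
      HasFDerivAt.prodMk (hasFDerivAt_id x) (hasFDerivAt_const t x)
    have hcomp : HasFDerivAt (fun y : Fin 3 → ℝ => Ω y t)
        ((fderiv ℝ (fun w : (Fin 3 → ℝ) × ℝ => Ω w.1 w.2) (x, t)).comp
          ((ContinuousLinearMap.id ℝ (Fin 3 → ℝ)).prod 0)) x :=
      hΩd.hasFDerivAt.comp (g := fun w : (Fin 3 → ℝ) × ℝ => Ω w.1 w.2) x hline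
    rw [hcomp.fderiv]
    simp [hS_def]
  -- Newton's law: the time partial of K is the pressure gradient along the flow
  have F3 : ∀ (i : Fin 3) (p : ℝ × ℝ × ℝ),
      fderiv ℝ (K i) p ((0:ℝ), (0:ℝ), (1:ℝ)) = S i (Φ (σ p.1 p.2.1) p.2.2, p.2.2) := by
    intro i p
    obtain ⟨s', τ', t'⟩ := p
    have h1 : HasDerivAt (fun x => K i (s', τ', x))
        (fderiv ℝ (K i) (s', τ', t') (0, 0, 1)) t' :=
      hasDerivAt_lineT3 (((hK i).differentiable two_ne_zero) _)
    have h2 : HasDerivAt (fun x => G i (σ s' τ', x))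
        (fderiv ℝ (G i) (σ s' τ', t') ((0 : Fin 3 → ℝ), (1:ℝ))) t' :=
      hasDerivAt_lineR (((hG i).differentiable two_ne_zero) _)
    have e1 : fderiv ℝ (K i) (s', τ', t') ((0:ℝ), (0:ℝ), (1:ℝ))
        = fderiv ℝ (G i) (σ s' τ', t') ((0 : Fin 3 → ℝ), (1:ℝ)) := h1.unique h2
    have hvec : HasDerivAt (fun x => deriv (fun r => Φ (σ s' τ') r) x)
        (fun j => fderiv ℝ (G j) (σ s' τ', t') ((0 : Fin 3 → ℝ), (1:ℝ))) t' := by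
      have e : (fun x => deriv (fun r => Φ (σ s' τ') r) x)
          = fun x => (fun j => G j (σ s' τ', x)) := by
        funext x; exact F1' (σ s' τ') x
      rw [e]
      exact hasDerivAt_pi.2 (fun j =>
        hasDerivAt_lineR (((hG j).differentiable two_ne_zero) _))
    have e2 := hmotion (σ s' τ') t' i
    rw [hvec.deriv] at e2
    have e2' : fderiv ℝ (G i) (σ s' τ', t') ((0 : Fin 3 → ℝ), (1:ℝ))
        = fderiv ℝ (fun x => Ω x t') (Φ (σ s' τ') t') (Pi.single i 1) := by simpa using e2
    rw [e1, e2']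
    exact W_eq i (Φ (σ s' τ') t') t'
  -- now fix s, τ and set up the four first-order quantities
  set A : Fin 3 → ℝ → ℝ := fun i t => fderiv ℝ (Q i) (s, τ, t) ((1:ℝ), (0:ℝ), (0:ℝ)) with hA_def
  set B : Fin 3 → ℝ → ℝ := fun i t => fderiv ℝ (Q i) (s, τ, t) ((0:ℝ), (1:ℝ), (0:ℝ)) with hB_def
  set KS : Fin 3 → ℝ → ℝ := fun i t => fderiv ℝ (K i) (s, τ, t) ((1:ℝ), (0:ℝ), (0:ℝ)) with hKS_def
  set KT : Fin 3 → ℝ → ℝ := fun i t => fderiv ℝ (K i) (s, τ, t) ((0:ℝ), (1:ℝ), (0:ℝ)) with hKT_def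
  have hAd : ∀ (i : Fin 3) (t : ℝ), HasDerivAt (fun s' => Φ (σ s' τ) t i) (A i t) s :=
    fun i t => hasDerivAt_lineS (((hQ i).differentiable two_ne_zero) _)
  have hAv : ∀ t : ℝ, HasDerivAt (fun s' => Φ (σ s' τ) t) (fun i => A i t) s :=
    fun t => hasDerivAt_pi.2 (fun i => hAd i t)
  have C1 : ∀ t : ℝ, deriv (fun s' => Φ (σ s' τ) t) s = fun i => A i t :=
    fun t => (hAv t).deriv
  have hBd : ∀ (i : Fin 3) (t : ℝ), HasDerivAt (fun τ' => Φ (σ s τ') t i) (B i t) τ :=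
    fun i t => hasDerivAt_lineT2 (((hQ i).differentiable two_ne_zero) _)
  have hBv : ∀ t : ℝ, HasDerivAt (fun τ' => Φ (σ s τ') t) (fun i => B i t) τ :=
    fun t => hasDerivAt_pi.2 (fun i => hBd i t)
  have C2 : ∀ t : ℝ, deriv (fun τ' => Φ (σ s τ') t) τ = fun i => B i t :=
    fun t => (hBv t).deriv
  have hud : ∀ (t : ℝ) (i : Fin 3) (x : Fin 3 → ℝ),
      DifferentiableAt ℝ (fun y => u y t i) x := by
    intro t i x
    have h1 : ContDiff ℝ 1 (fun y : Fin 3 → ℝ => u y t) :=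
      hu.comp (contDiff_id.prodMk contDiff_const)
    exact ((contDiff_pi.1 h1 i).differentiable one_ne_zero) x
  have C3 : ∀ (i : Fin 3) (t : ℝ), KS i t
      = ∑ k, A k t * fderiv ℝ (fun y => u y t i) (Φ (σ s τ) t) (Pi.single k 1) := by
    intro i t
    have h1 : HasDerivAt (fun s' => K i (s', τ, t)) (KS i t) s :=
      hasDerivAt_lineS (((hK i).differentiable two_ne_zero) _)
    have h2 : HasDerivAt (fun s' => u (Φ (σ s' τ) t) t i)
        (∑ k, (fun k => A k t) k * fderiv ℝ (fun y => u y t i)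
          ((fun s' => Φ (σ s' τ) t) s) (Pi.single k 1)) s :=
      hasDerivAt_chain3 (hud t i _) (hAv t)
    have e : (fun s' => K i (s', τ, t)) = fun s' => u (Φ (σ s' τ) t) t i := by
      funext s'; exact (H1 i (s', τ, t)).symm
    rw [e] at h1
    exact h1.unique h2
  have C4 : ∀ (i : Fin 3) (t : ℝ), KT i t
      = ∑ k, B k t * fderiv ℝ (fun y => u y t i) (Φ (σ s τ) t) (Pi.single k 1) := by
    intro i t
    have h1 : HasDerivAt (fun τ' => K i (s, τ', t)) (KT i t) τ :=
      hasDerivAt_lineT2 (((hK i).differentiable two_ne_zero) _)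
    have h2 : HasDerivAt (fun τ' => u (Φ (σ s τ') t) t i)
        (∑ k, (fun k => B k t) k * fderiv ℝ (fun y => u y t i)
          ((fun τ' => Φ (σ s τ') t) τ) (Pi.single k 1)) τ :=
      hasDerivAt_chain3 (hud t i _) (hBv t)
    have e : (fun τ' => K i (s, τ', t)) = fun τ' => u (Φ (σ s τ') t) t i := by
      funext τ'; exact (H1 i (s, τ', t)).symm
    rw [e] at h1
    exact h1.unique h2
  -- Step 1: the integrand equals ∑ i (KS i t * B i t - KT i t * A i t)
  have Step1 : ∀ t : ℝ, (∑ i, curl3 (fun x => u x t) (Φ (σ s τ) t) i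
        * cross3 (deriv (fun s' => Φ (σ s' τ) t) s) (deriv (fun τ' => Φ (σ s τ') t) τ) i)
      = ∑ i, (KS i t * B i t - KT i t * A i t) := by
    intro t
    rw [C1 t, C2 t]
    simp only [curl3, cross3, Fin.sum_univ_three, Matrix.cons_val_zero, Matrix.cons_val_one,
      Matrix.head_cons, Matrix.cons_val_two, Matrix.tail_cons]
    rw [C3 0 t, C3 1 t, C3 2 t, C4 0 t, C4 1 t, C4 2 t]
    simp only [Fin.sum_univ_three]
    ring
  -- Step 2: derivatives in time
  have hA' : ∀ (i : Fin 3) (t : ℝ), HasDerivAt (fun t' => A i t') (KS i t) t := by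
    intro i t
    have hdiff : Differentiable ℝ (fun p : ℝ × ℝ × ℝ =>
        fderiv ℝ (Q i) p ((1:ℝ), (0:ℝ), (0:ℝ))) :=
      ((((hQ i).fderiv_right h21).clm_apply contDiff_const)).differentiable one_ne_zero
    have h1 := hasDerivAt_lineT3 (s := s) (τ := τ) (t := t) (hdiff _)
    rw [my_swap (hQ i) (s, τ, t) ((1:ℝ),(0:ℝ),(0:ℝ)) ((0:ℝ),(0:ℝ),(1:ℝ))] at h1
    have e2 : (fun p : ℝ × ℝ × ℝ => fderiv ℝ (Q i) p ((0:ℝ),(0:ℝ),(1:ℝ))) = K i :=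
      funext (F2 i)
    rw [e2] at h1
    exact h1
  have hB' : ∀ (i : Fin 3) (t : ℝ), HasDerivAt (fun t' => B i t') (KT i t) t := by
    intro i t
    have hdiff : Differentiable ℝ (fun p : ℝ × ℝ × ℝ =>
        fderiv ℝ (Q i) p ((0:ℝ), (1:ℝ), (0:ℝ))) :=
      ((((hQ i).fderiv_right h21).clm_apply contDiff_const)).differentiable one_ne_zero
    have h1 := hasDerivAt_lineT3 (s := s) (τ := τ) (t := t) (hdiff _)
    rw [my_swap (hQ i) (s, τ, t) ((0:ℝ),(1:ℝ),(0:ℝ)) ((0:ℝ),(0:ℝ),(1:ℝ))] at h1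
    have e2 : (fun p : ℝ × ℝ × ℝ => fderiv ℝ (Q i) p ((0:ℝ),(0:ℝ),(1:ℝ))) = K i :=
      funext (F2 i)
    rw [e2] at h1
    exact h1
  have hKS' : ∀ (i : Fin 3) (t : ℝ), HasDerivAt (fun t' => KS i t')
      (∑ j, A j t * fderiv ℝ (fun x => S i (x, t)) (Φ (σ s τ) t) (Pi.single j 1)) t := by
    intro i t
    have hdiff : Differentiable ℝ (fun p : ℝ × ℝ × ℝ =>
        fderiv ℝ (K i) p ((1:ℝ), (0:ℝ), (0:ℝ))) :=
      ((((hK i).fderiv_right h21).clm_apply contDiff_const)).differentiable one_ne_zero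
    have h1 := hasDerivAt_lineT3 (s := s) (τ := τ) (t := t) (hdiff _)
    rw [my_swap (hK i) (s, τ, t) ((1:ℝ),(0:ℝ),(0:ℝ)) ((0:ℝ),(0:ℝ),(1:ℝ))] at h1
    have e2 : (fun p : ℝ × ℝ × ℝ => fderiv ℝ (K i) p ((0:ℝ),(0:ℝ),(1:ℝ)))
        = fun p : ℝ × ℝ × ℝ => S i (Φ (σ p.1 p.2.1) p.2.2, p.2.2) := funext (F3 i)
    rw [e2] at h1
    have hSM : Differentiable ℝ (fun p : ℝ × ℝ × ℝ => S i (Φ (σ p.1 p.2.1) p.2.2, p.2.2)) := by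
      have : ContDiff ℝ 1 (fun p : ℝ × ℝ × ℝ => S i (Φ (σ p.1 p.2.1) p.2.2, p.2.2)) :=
        (hS i).comp ((((hΦ.of_le (by exact WithTop.coe_le_coe.mpr (le_top : (2:ℕ∞) ≤ ⊤))).comp hm).of_le h12).prodMk
          ((contDiff_snd.comp contDiff_snd).of_le h12))
      exact this.differentiable one_ne_zero
    have h2 : HasDerivAt (fun s' => S i (Φ (σ s' τ) t, t))
        (fderiv ℝ (fun p : ℝ × ℝ × ℝ => S i (Φ (σ p.1 p.2.1) p.2.2, p.2.2)) (s, τ, t)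
          ((1:ℝ),(0:ℝ),(0:ℝ))) s :=
      hasDerivAt_lineS (hSM _)
    have hFx : DifferentiableAt ℝ (fun x : Fin 3 → ℝ => S i (x, t)) (Φ (σ s τ) t) := by
      have : ContDiff ℝ 1 (fun x : Fin 3 → ℝ => S i (x, t)) :=
        (hS i).comp (contDiff_id.prodMk contDiff_const)
      exact (this.differentiable one_ne_zero) _
    have h3 : HasDerivAt (fun s' => S i ((fun s' => Φ (σ s' τ) t) s', t))
        (∑ j, (fun j => A j t) j * fderiv ℝ (fun x : Fin 3 → ℝ => S i (x, t))
          ((fun s' => Φ (σ s' τ) t) s) (Pi.single j 1)) s :=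
      hasDerivAt_chain3 (F := fun x : Fin 3 → ℝ => S i (x, t)) hFx (hAv t)
    have e3 := h2.unique h3
    rw [e3] at h1
    exact h1
  have hKT' : ∀ (i : Fin 3) (t : ℝ), HasDerivAt (fun t' => KT i t')
      (∑ j, B j t * fderiv ℝ (fun x => S i (x, t)) (Φ (σ s τ) t) (Pi.single j 1)) t := by
    intro i t
    have hdiff : Differentiable ℝ (fun p : ℝ × ℝ × ℝ =>
        fderiv ℝ (K i) p ((0:ℝ), (1:ℝ), (0:ℝ))) :=
      ((((hK i).fderiv_right h21).clm_apply contDiff_const)).differentiable one_ne_zero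
    have h1 := hasDerivAt_lineT3 (s := s) (τ := τ) (t := t) (hdiff _)
    rw [my_swap (hK i) (s, τ, t) ((0:ℝ),(1:ℝ),(0:ℝ)) ((0:ℝ),(0:ℝ),(1:ℝ))] at h1
    have e2 : (fun p : ℝ × ℝ × ℝ => fderiv ℝ (K i) p ((0:ℝ),(0:ℝ),(1:ℝ)))
        = fun p : ℝ × ℝ × ℝ => S i (Φ (σ p.1 p.2.1) p.2.2, p.2.2) := funext (F3 i)
    rw [e2] at h1
    have hSM : Differentiable ℝ (fun p : ℝ × ℝ × ℝ => S i (Φ (σ p.1 p.2.1) p.2.2, p.2.2)) := by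
      have : ContDiff ℝ 1 (fun p : ℝ × ℝ × ℝ => S i (Φ (σ p.1 p.2.1) p.2.2, p.2.2)) :=
        (hS i).comp ((((hΦ.of_le (by exact WithTop.coe_le_coe.mpr (le_top : (2:ℕ∞) ≤ ⊤))).comp hm).of_le h12).prodMk
          ((contDiff_snd.comp contDiff_snd).of_le h12))
      exact this.differentiable one_ne_zero
    have h2 : HasDerivAt (fun τ' => S i (Φ (σ s τ') t, t))
        (fderiv ℝ (fun p : ℝ × ℝ × ℝ => S i (Φ (σ p.1 p.2.1) p.2.2, p.2.2)) (s, τ, t)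
          ((0:ℝ),(1:ℝ),(0:ℝ))) τ :=
      hasDerivAt_lineT2 (hSM _)
    have hFx : DifferentiableAt ℝ (fun x : Fin 3 → ℝ => S i (x, t)) (Φ (σ s τ) t) := by
      have : ContDiff ℝ 1 (fun x : Fin 3 → ℝ => S i (x, t)) :=
        (hS i).comp (contDiff_id.prodMk contDiff_const)
      exact (this.differentiable one_ne_zero) _
    have h3 : HasDerivAt (fun τ' => S i ((fun τ' => Φ (σ s τ') t) τ', t))
        (∑ j, (fun j => B j t) j * fderiv ℝ (fun x : Fin 3 → ℝ => S i (x, t))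
          ((fun τ' => Φ (σ s τ') t) τ) (Pi.single j 1)) τ :=
      hasDerivAt_chain3 (F := fun x : Fin 3 → ℝ => S i (x, t)) hFx (hBv t)
    have e3 := h2.unique h3
    rw [e3] at h1
    exact h1
  -- symmetry of the Hessian of Ω
  have Hsym : ∀ (t : ℝ) (i j : Fin 3),
      fderiv ℝ (fun x => S i (x, t)) (Φ (σ s τ) t) (Pi.single j 1)
      = fderiv ℝ (fun x => S j (x, t)) (Φ (σ s τ) t) (Pi.single i 1) := by
    intro t i j
    have hΩt : ContDiff ℝ 2 (fun y : Fin 3 → ℝ => Ω y t) :=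
      hΩ.comp (contDiff_id.prodMk contDiff_const)
    have e : ∀ i : Fin 3, (fun x : Fin 3 → ℝ => S i (x, t))
        = fun x => fderiv ℝ (fun y : Fin 3 → ℝ => Ω y t) x (Pi.single i 1) := by
      intro i; funext x; exact (W_eq i x t).symm
    rw [e i, e j]
    exact my_swap hΩt _ _ _
  -- the reduced integrand is constant in time
  have Fm_deriv : ∀ t : ℝ,
      HasDerivAt (fun t' => ∑ i, (KS i t' * B i t' - KT i t' * A i t')) 0 t := by
    intro t
    have h := HasDerivAt.fun_sum (u := Finset.univ) (fun i _ =>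
      (((hKS' i t).mul (hB' i t)).sub ((hKT' i t).mul (hA' i t))))
    refine h.congr_deriv ?_
    simp only [Fin.sum_univ_three]
    rw [Hsym t 0 1, Hsym t 0 2, Hsym t 1 2]
    ring
  have hconst := is_const_of_deriv_eq_zero
    (f := fun t' => ∑ i, (KS i t' * B i t' - KT i t' * A i t'))
    (fun t => (Fm_deriv t).differentiableAt) (fun t => (Fm_deriv t).deriv)
  intro t t'
  rw [Step1 t, Step1 t']
  exact hconst t t'

/-- §9, equation (2): the flux of vorticity through a material surface is
constant in time (Helmholtz's theorem, derived from the Lagrangian equations). -/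
theorem hankel_vorticity_flux_conservation
    (Φ : (Fin 3 → ℝ) → ℝ → (Fin 3 → ℝ)) (u : (Fin 3 → ℝ) → ℝ → (Fin 3 → ℝ))
    (Ω : (Fin 3 → ℝ) → ℝ → ℝ) (σ : ℝ → ℝ → (Fin 3 → ℝ))
    (hΦ : ContDiff ℝ (⊤ : ℕ∞) (fun q : (Fin 3 → ℝ) × ℝ => Φ q.1 q.2))
    (hΦ0 : ∀ a, Φ a 0 = a)
    (hdiffeo : ∀ t : ℝ, ∃ Ψ : (Fin 3 → ℝ) → (Fin 3 → ℝ), ContDiff ℝ (⊤ : ℕ∞) Ψ ∧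
      Function.LeftInverse Ψ (fun a => Φ a t) ∧ Function.RightInverse Ψ (fun a => Φ a t))
    (hu : ContDiff ℝ 1 (fun q : (Fin 3 → ℝ) × ℝ => u q.1 q.2))
    (huΦ : ∀ a t, u (Φ a t) t = deriv (fun s => Φ a s) t)
    (hΩ : ContDiff ℝ 2 (fun q : (Fin 3 → ℝ) × ℝ => Ω q.1 q.2))
    (hmotion : ∀ (a : Fin 3 → ℝ) (t : ℝ) (i : Fin 3),
      deriv (fun s => deriv (fun r => Φ a r) s) t i
        = fderiv ℝ (fun x => Ω x t) (Φ a t) (Pi.single i 1))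
    (hσ : ContDiff ℝ 2 (fun q : ℝ × ℝ => σ q.1 q.2)) :
    ∀ t t' : ℝ,
      (∫ s in (0:ℝ)..1, ∫ τ in (0:ℝ)..1, ∑ i,
          curl3 (fun x => u x t) (Φ (σ s τ) t) i
            * cross3 (deriv (fun s' => Φ (σ s' τ) t) s)
                (deriv (fun τ' => Φ (σ s τ') t) τ) i)
        = ∫ s in (0:ℝ)..1, ∫ τ in (0:ℝ)..1, ∑ i,
            curl3 (fun x => u x t') (Φ (σ s τ) t') i
              * cross3 (deriv (fun s' => Φ (σ s' τ) t') s)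
                  (deriv (fun τ' => Φ (σ s τ') t') τ) i := by
  intro t t'
  have h := fun s τ => integrand_indep Φ u Ω σ hΦ hu huΦ hΩ hmotion hσ s τ t t'
  simp only [h]
end

section
/- Let F : ℝ³ × ℝ → ℝ and Ω : ℝ³ × ℝ → ℝ be C² functions and set u(x,t) = ∇ₓF(x,t). Suppose the Euler equations with potential hold: ∂ₜu(x,t) + (D_x u(x,t)) u(x,t) = ∇ₓΩ(x,t) for all (x,t). Then for each t the function x ↦ ∂ₜF(x,t) + ½ [ (∂F/∂x₁)² + (∂F/∂x₂)² + (∂F/∂x₃)² ] − Ω(x,t) has vanishing gradient on ℝ³, and hence is constant in x. -/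
/-!
Since `u = ∇ₓF`, the `i`-th spatial derivative of `∂ₜF + ½|∇ₓF|² − Ω` is
`∂ᵢ∂ₜF + ∑ⱼ ∂ⱼF ∂ᵢ∂ⱼF − ∂ᵢΩ`. Second derivatives of the `C²` function `F` are symmetric
(Schwarz), so this equals `∂ₜuᵢ + ∑ⱼ (∂ⱼuᵢ) uⱼ − ∂ᵢΩ`, which vanishes by the Euler equations.
A function on `ℝ³` with vanishing gradient is constant.
-/

section Slices

variable {E G : Type*} [NormedAddCommGroup E] [NormedSpace ℝ E] [NormedAddCommGroup G]
  [NormedSpace ℝ G] {g : E × ℝ → G} {x : E} {t : ℝ}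

theorem DifferentiableAt.hasFDerivAt_comp_prodMk_left (hg : DifferentiableAt ℝ g (x, t)) :
    HasFDerivAt (fun y => g (y, t)) ((fderiv ℝ g (x, t)).comp (.inl ℝ E ℝ)) x :=
  hg.hasFDerivAt.comp x (hasFDerivAt_prodMk_left x t)

theorem DifferentiableAt.comp_prodMk_left (hg : DifferentiableAt ℝ g (x, t)) :
    DifferentiableAt ℝ (fun y => g (y, t)) x :=
  hg.hasFDerivAt_comp_prodMk_left.differentiableAt

theorem fderiv_comp_prodMk_left_apply (hg : DifferentiableAt ℝ g (x, t)) (v : E) :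
    fderiv ℝ (fun y => g (y, t)) x v = fderiv ℝ g (x, t) (v, 0) := by
  rw [hg.hasFDerivAt_comp_prodMk_left.fderiv]
  rfl

theorem deriv_comp_prodMk_right (hg : DifferentiableAt ℝ g (x, t)) :
    deriv (fun s => g (x, s)) t = fderiv ℝ g (x, t) (0, 1) :=
  (hg.hasFDerivAt.comp_hasDerivAt t ((hasDerivAt_const t x).prodMk (hasDerivAt_id t))).deriv

end Slices

section MixedPartials

variable {E G : Type*} [NormedAddCommGroup E] [NormedSpace ℝ E] [NormedAddCommGroup G]
  [NormedSpace ℝ G] {f : E × ℝ → G}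

theorem ContDiff.differentiable_fderiv_apply (hf : ContDiff ℝ 2 f) (w : E × ℝ) :
    Differentiable ℝ (fun q => fderiv ℝ f q w) :=
  ((hf.fderiv_right (m := 1) le_rfl).differentiable one_ne_zero).clm_apply
    (differentiable_const w)

theorem ContDiff.fderiv_fderiv_apply_apply (hf : ContDiff ℝ 2 f) (q v w : E × ℝ) :
    fderiv ℝ (fun q => fderiv ℝ f q w) q v = fderiv ℝ (fderiv ℝ f) q v w := by
  rw [fderiv_clm_apply ((hf.fderiv_right (m := 1) le_rfl).differentiable one_ne_zero q)
    (differentiableAt_const w)]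
  simp

theorem ContDiff.differentiable_fderiv_comp_prodMk_left (hf : ContDiff ℝ 2 f) (t : ℝ) (v : E) :
    Differentiable ℝ (fun y => fderiv ℝ (fun z => f (z, t)) y v) := by
  simp only [fderiv_comp_prodMk_left_apply (hf.differentiable two_ne_zero _)]
  exact fun y => (hf.differentiable_fderiv_apply _ _).comp_prodMk_left

theorem ContDiff.differentiable_deriv_comp_prodMk_right (hf : ContDiff ℝ 2 f) (t : ℝ) :
    Differentiable ℝ (fun y => deriv (fun s => f (y, s)) t) := by
  simp only [deriv_comp_prodMk_right (hf.differentiable two_ne_zero _)]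
  exact fun y => (hf.differentiable_fderiv_apply _ _).comp_prodMk_left

theorem ContDiff.fderiv_fderiv_comp_prodMk_left_comm (hf : ContDiff ℝ 2 f) (x : E) (t : ℝ)
    (v w : E) :
    fderiv ℝ (fun y => fderiv ℝ (fun z => f (z, t)) y v) x w =
      fderiv ℝ (fun y => fderiv ℝ (fun z => f (z, t)) y w) x v := by
  have hsymm := hf.contDiffAt.isSymmSndFDerivAt (x := (x, t)) (by simp)
  simp only [fderiv_comp_prodMk_left_apply (hf.differentiable two_ne_zero _),
    fderiv_comp_prodMk_left_apply (hf.differentiable_fderiv_apply _ _),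
    hf.fderiv_fderiv_apply_apply, hsymm (w, 0)]

theorem ContDiff.fderiv_deriv_comm (hf : ContDiff ℝ 2 f) (x : E) (t : ℝ) (v : E) :
    fderiv ℝ (fun y => deriv (fun s => f (y, s)) t) x v =
      deriv (fun s => fderiv ℝ (fun z => f (z, s)) x v) t := by
  have hsymm := hf.contDiffAt.isSymmSndFDerivAt (x := (x, t)) (by simp)
  simp only [fderiv_comp_prodMk_left_apply (hf.differentiable two_ne_zero _),
    deriv_comp_prodMk_right (hf.differentiable two_ne_zero _),
    fderiv_comp_prodMk_left_apply (hf.differentiable_fderiv_apply _ _),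
    deriv_comp_prodMk_right (hf.differentiable_fderiv_apply _ _),
    hf.fderiv_fderiv_apply_apply, hsymm (v, 0)]

end MixedPartials

theorem fderiv_add_half_sum_sq_sub_apply {E ι : Type*} [NormedAddCommGroup E] [NormedSpace ℝ E]
    [Fintype ι] {φ ω : E → ℝ} {g : ι → E → ℝ} {x : E} (hφ : DifferentiableAt ℝ φ x)
    (hg : ∀ j, DifferentiableAt ℝ (g j) x) (hω : DifferentiableAt ℝ ω x) (v : E) :
    fderiv ℝ (fun y => φ y + 1 / 2 * ∑ j, g j y ^ 2 - ω y) x v =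
      fderiv ℝ φ x v + ∑ j, g j x * fderiv ℝ (g j) x v - fderiv ℝ ω x v := by
  have hsq := HasFDerivAt.fun_sum fun j (_ : j ∈ Finset.univ) => (hg j).hasFDerivAt.pow 2
  rw [((hφ.hasFDerivAt.fun_add (hsq.const_mul (1 / 2))).fun_sub hω.hasFDerivAt).fderiv]
  simp only [sub_apply, add_apply, smul_apply, sum_apply, smul_eq_mul, nsmul_eq_mul,
    Nat.add_one_sub_one, pow_one, Nat.cast_ofNat, Finset.mul_sum]
  congr 2
  exact Finset.sum_congr rfl fun j _ => by ring

theorem is_const_of_fderiv_single_eq_zero {ι G : Type*} [Fintype ι] [DecidableEq ι]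
    [NormedAddCommGroup G] [NormedSpace ℝ G] {f : (ι → ℝ) → G} (hf : Differentiable ℝ f)
    (hf' : ∀ x i, fderiv ℝ f x (Pi.single i 1) = 0) (x x' : ι → ℝ) : f x = f x' := by
  refine is_const_of_fderiv_eq_zero hf (fun y => ?_) x x'
  ext1 v
  rw [pi_eq_sum_univ' v]
  simp [hf']

/-- §12, end: the unsteady Bernoulli equation. For a potential flow `u = ∇ₓF`
satisfying the Euler equations with potential `Ω`, the quantity
`∂ₜF + ½|∇F|² − Ω` has vanishing spatial gradient, hence is constant in space. -/
theorem hankel_bernoulli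
    (F Ω : (Fin 3 → ℝ) → ℝ → ℝ) (u : (Fin 3 → ℝ) → ℝ → (Fin 3 → ℝ))
    (hF : ContDiff ℝ 2 (fun q : (Fin 3 → ℝ) × ℝ => F q.1 q.2))
    (hΩ : ContDiff ℝ 2 (fun q : (Fin 3 → ℝ) × ℝ => Ω q.1 q.2))
    (hu : ∀ (x : Fin 3 → ℝ) (t : ℝ) (i : Fin 3),
      u x t i = fderiv ℝ (fun y => F y t) x (Pi.single i 1))
    (heuler : ∀ (x : Fin 3 → ℝ) (t : ℝ) (i : Fin 3),
      deriv (fun s => u x s i) t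
          + ∑ j, fderiv ℝ (fun y => u y t i) x (Pi.single j 1) * u x t j
        = fderiv ℝ (fun y => Ω y t) x (Pi.single i 1)) :
    ∀ t : ℝ,
      (∀ (x : Fin 3 → ℝ) (i : Fin 3),
        fderiv ℝ (fun y => deriv (fun s => F y s) t
            + (1 / 2) * ∑ j, (fderiv ℝ (fun z => F z t) y (Pi.single j 1)) ^ 2
            - Ω y t) x (Pi.single i 1) = 0) ∧
      (∀ x x' : Fin 3 → ℝ,
        deriv (fun s => F x s) t
            + (1 / 2) * ∑ j, (fderiv ℝ (fun z => F z t) x (Pi.single j 1)) ^ 2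
            - Ω x t
          = deriv (fun s => F x' s) t
            + (1 / 2) * ∑ j, (fderiv ℝ (fun z => F z t) x' (Pi.single j 1)) ^ 2
            - Ω x' t) := by
  intro t
  obtain rfl : u = fun x s i => fderiv ℝ (fun y => F y s) x (Pi.single i 1) :=
    funext fun x => funext fun s => funext fun i => hu x s i
  have hφ := hF.differentiable_deriv_comp_prodMk_right t
  have hg := fun j : Fin 3 => hF.differentiable_fderiv_comp_prodMk_left t (Pi.single j 1)
  have hω : Differentiable ℝ (fun y => Ω y t) :=
    fun y => (hΩ.differentiable two_ne_zero _).comp_prodMk_left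
  have hgrad : ∀ (x : Fin 3 → ℝ) (i : Fin 3),
      fderiv ℝ (fun y => deriv (fun s => F y s) t
          + (1 / 2) * ∑ j, (fderiv ℝ (fun z => F z t) y (Pi.single j 1)) ^ 2
          - Ω y t) x (Pi.single i 1) = 0 := by
    intro x i
    rw [fderiv_add_half_sum_sq_sub_apply (hφ x) (fun j => hg j x) (hω x), hF.fderiv_deriv_comm,
      ← heuler x t i]
    simp only [hF.fderiv_fderiv_comp_prodMk_left_comm x t (Pi.single i 1), mul_comm]
    ring
  exact ⟨hgrad, is_const_of_fderiv_single_eq_zero (by fun_prop) hgrad⟩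
end
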